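/- arXiv:2004.10830 — 9 statements merged into one kernel-verified Lean document; each statement's English description precedes it below -/
import Mathlib

section
/- Assume G(x,y) does not depend on y, and for every x ∈ X the functions y ↦ f(x,y) and y ↦ g_i(x,y), i = 1,…,q, are convex and continuously differentiable. If (x̄,ȳ) is a global optimal solution of the bilevel problem (P) and the LMFCQ holds at (x̄,y) for every y ∈ S(x̄), then for every z ∈ Λ(x̄,ȳ) the point (x̄,ȳ,z) is a global optimal solution of (KKTR). -/
/-- `Vec k` is the Euclidean space `ℝ^k`. -/
abbrev Vec (k : ℕ) := Fin k → ℝ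

/-!
For a convex lower-level problem the KKT conditions are sufficient for optimality: adding the
tangent inequalities `f y + f'(y' - y) ≤ f y'` and `zᵢ (gᵢ y + gᵢ'(y' - y)) ≤ zᵢ gᵢ y'`, the
derivative terms cancel by stationarity and `∑ zᵢ gᵢ y` vanishes by complementary slackness, so
`f y ≤ f y' - ∑ zᵢ gᵢ y' ≤ f y'` for every lower-level feasible `y'`. Hence every feasible point
`(x, y, z')` of (KKTR) has `y ∈ S(x)`, i.e. `(x, y)` is feasible for (P), and the optimality of
`(x̄, ȳ)` in (P) gives `F x̄ ȳ ≤ F x y`.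
-/

open Set

theorem ConvexOn.apply_add_le_of_hasFDerivAt {E : Type*} [NormedAddCommGroup E]
    [NormedSpace ℝ E] {f : E → ℝ} {f' : E →L[ℝ] ℝ} {a : E} (hf : ConvexOn ℝ univ f)
    (hf' : HasFDerivAt f f' a) (b : E) : f a + f' (b - a) ≤ f b := by
  set L : ℝ →ᵃ[ℝ] E := AffineMap.lineMap a b
  have hφ : ConvexOn ℝ univ (f ∘ L) := by simpa using hf.comp_affineMap L
  have hφ' : HasDerivAt (f ∘ L) (f' (b - a)) 0 :=
    hf'.comp_hasDerivAt_of_eq 0 AffineMap.hasDerivAt_lineMap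
      (AffineMap.lineMap_apply_zero a b).symm
  have hslope := hφ.deriv_le_slope (mem_univ 0) (mem_univ 1) zero_lt_one hφ'.differentiableAt
  rw [hφ'.deriv, slope_def_field] at hslope
  simp only [Function.comp_apply, L, AffineMap.lineMap_apply_one, AffineMap.lineMap_apply_zero,
    sub_zero, div_one] at hslope
  linarith

theorem isMinOn_of_convexOn_of_kkt {E ι : Type*} [NormedAddCommGroup E] [NormedSpace ℝ E]
    [Fintype ι] {f : E → ℝ} {g : ι → E → ℝ} {z : ι → ℝ} {y : E}
    (hf : ConvexOn ℝ univ f) (hg : ∀ i, ConvexOn ℝ univ (g i))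
    (hfd : DifferentiableAt ℝ f y) (hgd : ∀ i, DifferentiableAt ℝ (g i) y)
    (hstat : fderiv ℝ f y + ∑ i, z i • fderiv ℝ (g i) y = 0)
    (hz : ∀ i, 0 ≤ z i) (hcs : ∑ i, z i * g i y = 0) :
    IsMinOn f {y' | ∀ i, g i y' ≤ 0} y := by
  refine isMinOn_iff.mpr fun y' hy' => ?_
  have hstat' : fderiv ℝ f y (y' - y) + ∑ i, z i * fderiv ℝ (g i) y (y' - y) = 0 := by
    simpa using congrArg (· (y' - y)) hstat
  have hf_tangent := hf.apply_add_le_of_hasFDerivAt hfd.hasFDerivAt y'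
  have hg_tangent : ∑ i, z i * fderiv ℝ (g i) y (y' - y) ≤ ∑ i, z i * (g i y' - g i y) :=
    Finset.sum_le_sum fun i _ => mul_le_mul_of_nonneg_left
      (by linarith [(hg i).apply_add_le_of_hasFDerivAt (hgd i).hasFDerivAt y']) (hz i)
  have hsplit : ∑ i, z i * (g i y' - g i y) = ∑ i, z i * g i y' - ∑ i, z i * g i y := by
    simp only [mul_sub, Finset.sum_sub_distrib]
  have hfeas : ∑ i, z i * g i y' ≤ 0 :=
    Finset.sum_nonpos fun i _ => mul_nonpos_of_nonneg_of_nonpos (hz i) (hy' i)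
  linarith

theorem stmt_0_general
    {n m p q : ℕ}
    (F : Vec n → Vec m → ℝ) (G : Vec n → Vec m → Vec p)
    (f : Vec n → Vec m → ℝ) (g : Vec n → Vec m → Vec q)
    -- for every x ∈ X, the lower-level data is convex and C¹ in y
    (hconv : ∀ x : Vec n, (∃ y, ∀ j, G x y j ≤ 0) →
      ConvexOn ℝ Set.univ (f x) ∧ ContDiff ℝ 1 (f x) ∧
      ∀ i, ConvexOn ℝ Set.univ (fun y => g x y i) ∧ ContDiff ℝ 1 (fun y => g x y i))
    (xb : Vec n) (yb : Vec m)
    -- (xb, yb) is feasible for (P) : G ≤ 0 and yb ∈ S(xb)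
    (hPfeas : (∀ j, G xb yb j ≤ 0) ∧ (∀ i, g xb yb i ≤ 0) ∧
      ∀ y', (∀ i, g xb y' i ≤ 0) → f xb yb ≤ f xb y')
    -- (xb, yb) is globally optimal for (P)
    (hPopt : ∀ x y, (∀ j, G x y j ≤ 0) → (∀ i, g x y i ≤ 0) →
      (∀ y', (∀ i, g x y' i ≤ 0) → f x y ≤ f x y') → F xb yb ≤ F x y)
    -- z ∈ Λ(xb, yb)
    (z : Vec q)
    (hz1 : fderiv ℝ (f xb) yb + ∑ i, z i • fderiv ℝ (fun y' => g xb y' i) yb = 0)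
    (hz2 : ∀ i, 0 ≤ z i) (hz3 : ∀ i, g xb yb i ≤ 0)
    (hz4 : ∑ i, z i * g xb yb i = 0) :
    -- (xb, yb, z) is a global optimal solution of (KKTR)
    ((∀ j, G xb yb j ≤ 0) ∧
      (fderiv ℝ (f xb) yb + ∑ i, z i • fderiv ℝ (fun y' => g xb y' i) yb = 0) ∧
      (∀ i, g xb yb i ≤ 0) ∧ (∀ i, 0 ≤ z i) ∧ ∑ i, z i * g xb yb i = 0) ∧
    ∀ (x : Vec n) (y : Vec m) (z' : Vec q), (∀ j, G x y j ≤ 0) →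
      (fderiv ℝ (f x) y + ∑ i, z' i • fderiv ℝ (fun y' => g x y' i) y = 0) →
      (∀ i, g x y i ≤ 0) → (∀ i, 0 ≤ z' i) → (∑ i, z' i * g x y i = 0) →
      F xb yb ≤ F x y := by
  refine ⟨⟨hPfeas.1, hz1, hz3, hz2, hz4⟩, fun x y z' hG hstat hgy hz' hcs => ?_⟩
  obtain ⟨hf, hf_C1, hg⟩ := hconv x ⟨y, hG⟩
  have hmin : IsMinOn (f x) {y' | ∀ i, g x y' i ≤ 0} y :=
    isMinOn_of_convexOn_of_kkt (g := fun i y' => g x y' i) hf (fun i => (hg i).1)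
      (hf_C1.differentiable one_ne_zero y) (fun i => (hg i).2.differentiable one_ne_zero y)
      hstat hz' hcs
  exact hPopt x y hG hgy fun y' hy' => isMinOn_iff.mp hmin y' hy'

/-- Under lower-level convexity, smoothness and LMFCQ, a global
optimal solution `(x̄, ȳ)` of the bilevel problem (P) together with any lower-level
Lagrange multiplier `z ∈ Λ(x̄, ȳ)` yields a global optimal solution `(x̄, ȳ, z)` of
the KKT reformulation (KKTR). -/
theorem stmt_0
    {n m p q : ℕ} (hn : 0 < n) (hm : 0 < m) (hp : 0 < p) (hq : 0 < q)
    (F : Vec n → Vec m → ℝ) (G : Vec n → Vec m → Vec p)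
    (f : Vec n → Vec m → ℝ) (g : Vec n → Vec m → Vec q)
    -- G does not depend on y
    (hGy : ∀ x y y', G x y = G x y')
    -- for every x ∈ X, the lower-level data is convex and C¹ in y
    (hconv : ∀ x : Vec n, (∃ y, ∀ j, G x y j ≤ 0) →
      ConvexOn ℝ Set.univ (f x) ∧ ContDiff ℝ 1 (f x) ∧
      ∀ i, ConvexOn ℝ Set.univ (fun y => g x y i) ∧ ContDiff ℝ 1 (fun y => g x y i))
    -- standing assumption: S(x) ≠ ∅ for every x ∈ X
    (hS : ∀ x : Vec n, (∃ y, ∀ j, G x y j ≤ 0) →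
      ∃ y, (∀ i, g x y i ≤ 0) ∧ ∀ y', (∀ i, g x y' i ≤ 0) → f x y ≤ f x y')
    (xb : Vec n) (yb : Vec m)
    -- (xb, yb) is feasible for (P) : G ≤ 0 and yb ∈ S(xb)
    (hPfeas : (∀ j, G xb yb j ≤ 0) ∧ (∀ i, g xb yb i ≤ 0) ∧
      ∀ y', (∀ i, g xb y' i ≤ 0) → f xb yb ≤ f xb y')
    -- (xb, yb) is globally optimal for (P)
    (hPopt : ∀ x y, (∀ j, G x y j ≤ 0) → (∀ i, g x y i ≤ 0) →
      (∀ y', (∀ i, g x y' i ≤ 0) → f x y ≤ f x y') → F xb yb ≤ F x y)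
    -- LMFCQ holds at (xb, y) for every y ∈ S(xb)
    (hLMFCQ : ∀ y : Vec m, (∀ i, g xb y i ≤ 0) →
      (∀ y', (∀ i, g xb y' i ≤ 0) → f xb y ≤ f xb y') →
      ∃ d : Vec m, ∀ i, g xb y i = 0 → fderiv ℝ (fun y' => g xb y' i) y d < 0)
    -- z ∈ Λ(xb, yb)
    (z : Vec q)
    (hz1 : fderiv ℝ (f xb) yb + ∑ i, z i • fderiv ℝ (fun y' => g xb y' i) yb = 0)
    (hz2 : ∀ i, 0 ≤ z i) (hz3 : ∀ i, g xb yb i ≤ 0)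
    (hz4 : ∑ i, z i * g xb yb i = 0) :
    -- (xb, yb, z) is a global optimal solution of (KKTR)
    ((∀ j, G xb yb j ≤ 0) ∧
      (fderiv ℝ (f xb) yb + ∑ i, z i • fderiv ℝ (fun y' => g xb y' i) yb = 0) ∧
      (∀ i, g xb yb i ≤ 0) ∧ (∀ i, 0 ≤ z i) ∧ ∑ i, z i * g xb yb i = 0) ∧
    ∀ (x : Vec n) (y : Vec m) (z' : Vec q), (∀ j, G x y j ≤ 0) →
      (fderiv ℝ (f x) y + ∑ i, z' i • fderiv ℝ (fun y' => g x y' i) y = 0) →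
      (∀ i, g x y i ≤ 0) → (∀ i, 0 ≤ z' i) → (∑ i, z' i * g x y i = 0) →
      F xb yb ≤ F x y :=
  stmt_0_general F G f g hconv xb yb hPfeas hPopt z hz1 hz2 hz3 hz4
end

section
/- Assume G(x,y) does not depend on y, and for every x ∈ X the functions y ↦ f(x,y) and y ↦ g_i(x,y), i = 1,…,q, are convex and continuously differentiable. If (x̄,ȳ) is a local optimal solution of the bilevel problem (P) and the LMFCQ holds at (x̄,y) for every y ∈ S(x̄), then for every z ∈ Λ(x̄,ȳ) the point (x̄,ȳ,z) is a local optimal solution of (KKTR). -/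
open Set

theorem ConvexOn.fun_finsetSum {𝕜 E β ι : Type*} [Semiring 𝕜] [PartialOrder 𝕜] [AddCommMonoid E]
    [AddCommMonoid β] [PartialOrder β] [IsOrderedAddMonoid β] [SMul 𝕜 E] [Module 𝕜 β]
    {s : Set E} {t : Finset ι} {f : ι → E → β} (hs : Convex 𝕜 s)
    (hf : ∀ i ∈ t, ConvexOn 𝕜 s (f i)) : ConvexOn 𝕜 s fun x => ∑ i ∈ t, f i x := by
  classical
  induction t using Finset.induction_on with
  | empty => simpa using convexOn_const 0 hs
  | insert a t ha ih =>
    simp only [Finset.sum_insert ha]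
    exact (hf a (t.mem_insert_self a)).add (ih fun i hi => hf i (Finset.mem_insert_of_mem hi))

variable {E : Type*} [NormedAddCommGroup E] [NormedSpace ℝ E]

theorem ConvexOn.add_fderiv_sub_le {s : Set E} {φ : E → ℝ} {φ' : E →L[ℝ] ℝ} {a b : E}
    (hφ : ConvexOn ℝ s φ) (ha : a ∈ s) (hb : b ∈ s) (hφ' : HasFDerivAt φ φ' a) :
    φ a + φ' (b - a) ≤ φ b := by
  let ψ : ℝ → ℝ := fun t => φ (a + t • (b - a))
  have hψ : ConvexOn ℝ (Icc 0 1) ψ := by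
    have hline := (hφ.comp_affineMap (AffineMap.lineMap a b)).subset ?_ (convex_Icc 0 1)
    · simpa [ψ, Function.comp_def, AffineMap.lineMap_apply, add_comm] using hline
    · intro t ht
      simpa [AffineMap.lineMap_apply] using hφ.1.lineMap_mem ha hb ht
  have hψ' : HasDerivAt ψ (φ' (b - a)) 0 := by
    have hline : HasDerivAt (fun t : ℝ => a + t • (b - a)) (b - a) 0 := by
      simpa using ((hasDerivAt_id (0 : ℝ)).smul_const (b - a)).const_add a
    have hφ'0 : HasFDerivAt φ φ' (a + (0 : ℝ) • (b - a)) := by simpa using hφ'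
    exact hφ'0.comp_hasDerivAt (0 : ℝ) hline
  have hslope := hψ.le_slope_of_hasDerivAt (left_mem_Icc.2 zero_le_one) (right_mem_Icc.2 zero_le_one)
    zero_lt_one hψ'
  simp only [slope_def_field, ψ, zero_smul, add_zero, one_smul, add_sub_cancel, sub_zero,
    div_one] at hslope
  linarith

theorem ConvexOn.isMinOn_of_hasFDerivAt_eq_zero {s : Set E} {φ : E → ℝ} {a : E}
    (hφ : ConvexOn ℝ s φ) (ha : a ∈ s) (hφ' : HasFDerivAt φ (0 : E →L[ℝ] ℝ) a) :
    IsMinOn φ s a := fun b hb => by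
  simpa using hφ.add_fderiv_sub_le ha hb hφ'

theorem ConvexOn.isMinOn_inter_of_kkt {ι : Type*} [Fintype ι] {s : Set E} {φ : E → ℝ}
    {ψ : ι → E → ℝ} {μ : ι → ℝ} {y : E} (hφ : ConvexOn ℝ s φ) (hψ : ∀ i, ConvexOn ℝ s (ψ i))
    (hy : y ∈ s) (hφd : DifferentiableAt ℝ φ y) (hψd : ∀ i, DifferentiableAt ℝ (ψ i) y)
    (hstat : fderiv ℝ φ y + ∑ i, μ i • fderiv ℝ (ψ i) y = 0) (hμ : ∀ i, 0 ≤ μ i)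
    (hcompl : ∑ i, μ i * ψ i y = 0) :
    IsMinOn φ (s ∩ {y' | ∀ i, ψ i y' ≤ 0}) y := by
  let L : E → ℝ := fun y' => φ y' + ∑ i, μ i * ψ i y'
  have hL : ConvexOn ℝ s L :=
    hφ.add (ConvexOn.fun_finsetSum hφ.1 fun i _ => (hψ i).smul (hμ i))
  have hL' : HasFDerivAt L (0 : E →L[ℝ] ℝ) y := by
    rw [← hstat]
    exact hφd.hasFDerivAt.add
      (HasFDerivAt.fun_sum fun i _ => (hψd i).hasFDerivAt.const_mul (μ i))
  rintro y' ⟨hy's, hy'ψ⟩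
  have hmul_nonpos : ∑ i, μ i * ψ i y' ≤ 0 :=
    Finset.sum_nonpos fun i _ => mul_nonpos_of_nonneg_of_nonpos (hμ i) (hy'ψ i)
  have hLmin : L y ≤ L y' := hL.isMinOn_of_hasFDerivAt_eq_zero hy hL' hy's
  simp only [L, hcompl, add_zero] at hLmin
  show φ y ≤ φ y'
  linarith

theorem stmt_1_general
    {n m p q : ℕ}
    (F : Vec n → Vec m → ℝ) (G : Vec n → Vec m → Vec p)
    (f : Vec n → Vec m → ℝ) (g : Vec n → Vec m → Vec q)
    -- for every x ∈ X, the lower-level data is convex and C¹ in y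
    (hconv : ∀ x : Vec n, (∃ y, ∀ j, G x y j ≤ 0) →
      ConvexOn ℝ Set.univ (f x) ∧ ContDiff ℝ 1 (f x) ∧
      ∀ i, ConvexOn ℝ Set.univ (fun y => g x y i) ∧ ContDiff ℝ 1 (fun y => g x y i))
    (xb : Vec n) (yb : Vec m)
    -- (xb, yb) is feasible for (P) : G ≤ 0 and yb ∈ S(xb)
    (hPfeas : (∀ j, G xb yb j ≤ 0) ∧ (∀ i, g xb yb i ≤ 0) ∧
      ∀ y', (∀ i, g xb y' i ≤ 0) → f xb yb ≤ f xb y')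
    -- (xb, yb) is locally optimal for (P)
    (hPopt : ∃ ε > (0 : ℝ), ∀ (x : Vec n) (y : Vec m),
      dist (x, y) (xb, yb) < ε →
      (∀ j, G x y j ≤ 0) → (∀ i, g x y i ≤ 0) →
      (∀ y', (∀ i, g x y' i ≤ 0) → f x y ≤ f x y') → F xb yb ≤ F x y)
    -- z ∈ Λ(xb, yb)
    (z : Vec q)
    (hz1 : fderiv ℝ (f xb) yb + ∑ i, z i • fderiv ℝ (fun y' => g xb y' i) yb = 0)
    (hz2 : ∀ i, 0 ≤ z i) (hz3 : ∀ i, g xb yb i ≤ 0)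
    (hz4 : ∑ i, z i * g xb yb i = 0) :
    -- (xb, yb, z) is a local optimal solution of (KKTR)
    ((∀ j, G xb yb j ≤ 0) ∧
      (fderiv ℝ (f xb) yb + ∑ i, z i • fderiv ℝ (fun y' => g xb y' i) yb = 0) ∧
      (∀ i, g xb yb i ≤ 0) ∧ (∀ i, 0 ≤ z i) ∧ ∑ i, z i * g xb yb i = 0) ∧
    ∃ ε > (0 : ℝ), ∀ (x : Vec n) (y : Vec m) (z' : Vec q),
      dist (x, y, z') (xb, yb, z) < ε →
      (∀ j, G x y j ≤ 0) →
      (fderiv ℝ (f x) y + ∑ i, z' i • fderiv ℝ (fun y' => g x y' i) y = 0) →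
      (∀ i, g x y i ≤ 0) → (∀ i, 0 ≤ z' i) → (∑ i, z' i * g x y i = 0) →
      F xb yb ≤ F x y := by
  refine ⟨⟨hPfeas.1, hz1, hz3, hz2, hz4⟩, ?_⟩
  obtain ⟨ε, hε, hopt⟩ := hPopt
  refine ⟨ε, hε, fun x y z' hdist hG hstat hgy hz' hcompl => hopt x y ?_ hG hgy ?_⟩
  · calc dist (x, y) (xb, yb) ≤ dist (x, y, z') (xb, yb, z) := by
          simp only [Prod.dist_eq]
          exact max_le_max le_rfl (le_max_left _ _)
      _ < ε := hdist
  · obtain ⟨hfc, hfd, hg⟩ := hconv x ⟨y, hG⟩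
    have hmin := ConvexOn.isMinOn_inter_of_kkt (ψ := fun i y' => g x y' i) hfc
      (fun i => (hg i).1) (mem_univ y) (hfd.differentiable one_ne_zero y)
      (fun i => (hg i).2.differentiable one_ne_zero y) hstat hz' hcompl
    exact fun y' hy' => isMinOn_iff.1 hmin y' ⟨mem_univ y', hy'⟩

/-- Under lower-level convexity, smoothness and LMFCQ, a local
optimal solution `(x̄, ȳ)` of the bilevel problem (P) together with any lower-level
Lagrange multiplier `z ∈ Λ(x̄, ȳ)` yields a local optimal solution `(x̄, ȳ, z)` of
the KKT reformulation (KKTR). -/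
theorem stmt_1
    {n m p q : ℕ} (hn : 0 < n) (hm : 0 < m) (hp : 0 < p) (hq : 0 < q)
    (F : Vec n → Vec m → ℝ) (G : Vec n → Vec m → Vec p)
    (f : Vec n → Vec m → ℝ) (g : Vec n → Vec m → Vec q)
    -- G does not depend on y
    (hGy : ∀ x y y', G x y = G x y')
    -- for every x ∈ X, the lower-level data is convex and C¹ in y
    (hconv : ∀ x : Vec n, (∃ y, ∀ j, G x y j ≤ 0) →
      ConvexOn ℝ Set.univ (f x) ∧ ContDiff ℝ 1 (f x) ∧
      ∀ i, ConvexOn ℝ Set.univ (fun y => g x y i) ∧ ContDiff ℝ 1 (fun y => g x y i))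
    -- standing assumption: S(x) ≠ ∅ for every x ∈ X
    (hS : ∀ x : Vec n, (∃ y, ∀ j, G x y j ≤ 0) →
      ∃ y, (∀ i, g x y i ≤ 0) ∧ ∀ y', (∀ i, g x y' i ≤ 0) → f x y ≤ f x y')
    (xb : Vec n) (yb : Vec m)
    -- (xb, yb) is feasible for (P) : G ≤ 0 and yb ∈ S(xb)
    (hPfeas : (∀ j, G xb yb j ≤ 0) ∧ (∀ i, g xb yb i ≤ 0) ∧
      ∀ y', (∀ i, g xb y' i ≤ 0) → f xb yb ≤ f xb y')
    -- (xb, yb) is locally optimal for (P)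
    (hPopt : ∃ ε > (0 : ℝ), ∀ (x : Vec n) (y : Vec m),
      dist (x, y) (xb, yb) < ε →
      (∀ j, G x y j ≤ 0) → (∀ i, g x y i ≤ 0) →
      (∀ y', (∀ i, g x y' i ≤ 0) → f x y ≤ f x y') → F xb yb ≤ F x y)
    -- LMFCQ holds at (xb, y) for every y ∈ S(xb)
    (hLMFCQ : ∀ y : Vec m, (∀ i, g xb y i ≤ 0) →
      (∀ y', (∀ i, g xb y' i ≤ 0) → f xb y ≤ f xb y') →
      ∃ d : Vec m, ∀ i, g xb y i = 0 → fderiv ℝ (fun y' => g xb y' i) y d < 0)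
    -- z ∈ Λ(xb, yb)
    (z : Vec q)
    (hz1 : fderiv ℝ (f xb) yb + ∑ i, z i • fderiv ℝ (fun y' => g xb y' i) yb = 0)
    (hz2 : ∀ i, 0 ≤ z i) (hz3 : ∀ i, g xb yb i ≤ 0)
    (hz4 : ∑ i, z i * g xb yb i = 0) :
    -- (xb, yb, z) is a local optimal solution of (KKTR)
    ((∀ j, G xb yb j ≤ 0) ∧
      (fderiv ℝ (f xb) yb + ∑ i, z i • fderiv ℝ (fun y' => g xb y' i) yb = 0) ∧
      (∀ i, g xb yb i ≤ 0) ∧ (∀ i, 0 ≤ z i) ∧ ∑ i, z i * g xb yb i = 0) ∧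
    ∃ ε > (0 : ℝ), ∀ (x : Vec n) (y : Vec m) (z' : Vec q),
      dist (x, y, z') (xb, yb, z) < ε →
      (∀ j, G x y j ≤ 0) →
      (fderiv ℝ (f x) y + ∑ i, z' i • fderiv ℝ (fun y' => g x y' i) y = 0) →
      (∀ i, g x y i ≤ 0) → (∀ i, 0 ≤ z' i) → (∑ i, z' i * g x y i = 0) →
      F xb yb ≤ F x y :=
  stmt_1_general F G f g hconv xb yb hPfeas hPopt z hz1 hz2 hz3 hz4
end

section
/- Assume G(x,y) does not depend on y, and for every x ∈ X the functions y ↦ f(x,y) and y ↦ g_i(x,y), i = 1,…,q, are convex and continuously differentiable. If the LMFCQ holds at (x,y) for every x ∈ X and every y ∈ S(x), and (x̄,ȳ,z̄) is a global optimal solution of (KKTR), then (x̄,ȳ) is a global optimal solution of the bilevel problem (P). -/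
/-!
The bilevel point `(x̄, ȳ)` is feasible for (P) because, the lower-level problem at `x̄` being
convex, the KKT conditions carried by `(x̄, ȳ, z̄)` make `ȳ` a minimiser of the Lagrangian
`f + ∑ z̄ᵢ gᵢ`, hence of `f` on the feasible set. Conversely, every `y ∈ S(x)` admits KKT
multipliers `z`, since LMFCQ makes the linearised cone at `y` the closure of the cone of strictly
feasible directions, on which `∇f ≥ 0`, and Farkas' lemma turns this into multipliers. So every
feasible point of (P) lifts to a feasible point of (KKTR), where `F` is at least `F(x̄, ȳ)`.
-/

open Filter Set Topology

section Farkas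

variable {W ι : Type*} [AddCommGroup W] [Module ℝ W]

theorem Module.Dual.exists_smul_eq_of_ker_le_ker {a r : Module.Dual ℝ W}
    (h : LinearMap.ker a ≤ LinearMap.ker r) : ∃ μ : ℝ, μ • a = r := by
  have : r ∈ Submodule.span ℝ (range fun _ : Unit => a) :=
    mem_span_of_iInf_ker_le_ker (by simpa using h)
  simpa [Submodule.mem_span_singleton] using this

/-- Farkas' lemma; the induction step restricts to the kernel of the new functional. -/
theorem Module.Dual.exists_nonneg_eq_sum_smul_of_forall_nonpos [DecidableEq ι] (s : Finset ι)
    (a : ι → Module.Dual ℝ W) (c : Module.Dual ℝ W)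
    (h : ∀ d, (∀ i ∈ s, a i d ≤ 0) → c d ≤ 0) :
    ∃ z : ι → ℝ, (∀ i, 0 ≤ z i) ∧ (∀ i ∉ s, z i = 0) ∧ c = ∑ i ∈ s, z i • a i := by
  induction s using Finset.induction_on generalizing W with
  | empty =>
    refine ⟨0, fun _ => le_rfl, fun _ _ => rfl, ?_⟩
    ext d
    have h₁ := h d (by simp)
    have h₂ := h (-d) (by simp)
    simp only [map_neg, Left.neg_nonpos_iff] at h₂
    simpa using le_antisymm h₁ h₂
  | @insert i₀ s hi₀ ih =>
    by_cases hs : ∀ d, (∀ i ∈ s, a i d ≤ 0) → c d ≤ 0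
    · obtain ⟨z, hz, hzs, rfl⟩ := ih a c hs
      refine ⟨z, hz, fun i hi => hzs i fun h => hi (Finset.mem_insert_of_mem h), ?_⟩
      rw [Finset.sum_insert hi₀, hzs i₀ hi₀, zero_smul, zero_add]
    obtain ⟨u, hu, hcu⟩ : ∃ u, (∀ i ∈ s, a i u ≤ 0) ∧ 0 < c u := by simpa using hs
    have hau : 0 < a i₀ u := by
      by_contra! hau
      exact hcu.not_ge (h u (Finset.forall_mem_insert _ _ _ |>.2 ⟨hau, hu⟩))
    set K := LinearMap.ker (a i₀)
    obtain ⟨w, hw, hws, hwc⟩ := ih (fun i => a i ∘ₗ K.subtype) (c ∘ₗ K.subtype)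
      fun d hd => h d (Finset.forall_mem_insert _ _ _ |>.2 ⟨(LinearMap.mem_ker.1 d.2).le, hd⟩)
    obtain ⟨μ, hμ⟩ := exists_smul_eq_of_ker_le_ker (a := a i₀) (r := c - ∑ i ∈ s, w i • a i)
      fun d hd => by
        have := LinearMap.congr_fun hwc ⟨d, hd⟩
        simp only [LinearMap.coe_comp, Function.comp_apply, Submodule.coe_subtype,
          LinearMap.sum_apply, LinearMap.smul_apply] at this
        simp [this]
    have hμ0 : 0 ≤ μ := by
      have hμu := LinearMap.congr_fun hμ u
      simp only [LinearMap.smul_apply, smul_eq_mul, LinearMap.sub_apply, LinearMap.sum_apply] at hμu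
      have : ∑ i ∈ s, w i * a i u ≤ 0 :=
        Finset.sum_nonpos fun i hi => mul_nonpos_of_nonneg_of_nonpos (hw i) (hu i hi)
      nlinarith
    refine ⟨Function.update w i₀ μ, fun i => ?_, fun i hi => ?_, ?_⟩
    · rcases eq_or_ne i i₀ with rfl | hi
      · simpa using hμ0
      · simpa [hi] using hw i
    · rw [Finset.mem_insert, not_or] at hi
      simp [hi.1, hws i hi.2]
    · rw [Finset.sum_insert hi₀, Function.update_self,
        Finset.sum_congr rfl fun i hi =>
          by rw [Function.update_of_ne (ne_of_mem_of_not_mem hi hi₀)],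
        hμ, sub_add_cancel]

end Farkas

theorem convexOn_sum {𝕜 E β ι : Type*} [Semiring 𝕜] [PartialOrder 𝕜] [AddCommMonoid E]
    [SMul 𝕜 E] [AddCommMonoid β] [PartialOrder β] [IsOrderedAddMonoid β] [Module 𝕜 β]
    {s : Set E} (hs : Convex 𝕜 s) {f : ι → E → β} (t : Finset ι)
    (hf : ∀ i ∈ t, ConvexOn 𝕜 s (f i)) : ConvexOn 𝕜 s fun x => ∑ i ∈ t, f i x := by
  classical
  induction t using Finset.induction_on with
  | empty => simpa using convexOn_const 0 hs
  | @insert i t hi ih =>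
    simp only [Finset.sum_insert hi]
    exact (hf i (t.mem_insert_self i)).add (ih fun j hj => hf j (Finset.mem_insert_of_mem hj))

section KKT

variable {E ι : Type*} [NormedAddCommGroup E] [NormedSpace ℝ E]

theorem ConvexOn.le_sub_of_hasFDerivAt {φ : E → ℝ} {φ' : E →L[ℝ] ℝ} {y : E}
    (hφ : ConvexOn ℝ univ φ) (hd : HasFDerivAt φ φ' y) (w : E) : φ' (w - y) ≤ φ w - φ y := by
  have hline : ConvexOn ℝ univ fun t : ℝ => φ (y + t • (w - y)) := by
    simpa [Function.comp_def, AffineMap.lineMap_apply, add_comm] using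
      hφ.comp_affineMap (AffineMap.lineMap (k := ℝ) y w)
  simpa [slope_def_field] using
    hline.le_slope_of_hasDerivAt (mem_univ 0) (mem_univ 1) one_pos (hd.hasLineDerivAt (w - y))

variable [Fintype ι] {f : E → ℝ} {g : ι → E → ℝ} {f' : E →L[ℝ] ℝ} {g' : ι → E →L[ℝ] ℝ} {y : E}

/-- The Lagrangian `f + ∑ zᵢ gᵢ` is convex with vanishing derivative at `y`, so `y` minimises it. -/
theorem ConvexOn.isMinOn_of_kkt (hf : ConvexOn ℝ univ f) (hg : ∀ i, ConvexOn ℝ univ (g i))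
    (hf' : HasFDerivAt f f' y) (hg' : ∀ i, HasFDerivAt (g i) (g' i) y) {z : ι → ℝ}
    (hz : ∀ i, 0 ≤ z i) (hstat : f' + ∑ i, z i • g' i = 0) (hcompl : ∑ i, z i * g i y = 0) :
    IsMinOn f {w | ∀ i, g i w ≤ 0} y := by
  intro w hw
  have hL : ConvexOn ℝ univ fun v => f v + ∑ i, z i * g i v :=
    hf.add (convexOn_sum convex_univ _ fun i _ => (hg i).smul (hz i))
  have hL' : HasFDerivAt (fun v => f v + ∑ i, z i * g i v) 0 y :=
    hstat ▸ hf'.add (HasFDerivAt.fun_sum fun i _ => (hg' i).const_mul (z i))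
  have hgw : ∑ i, z i * g i w ≤ 0 :=
    Finset.sum_nonpos fun i _ => mul_nonpos_of_nonneg_of_nonpos (hz i) (hw i)
  have := hL.le_sub_of_hasFDerivAt hL' w
  simp only [zero_apply, hcompl] at this
  change f y ≤ f w
  linarith

theorem eventually_nonpos_of_hasDerivAt {ψ : ℝ → ℝ} {ψ' : ℝ} (hψ : HasDerivAt ψ ψ' 0)
    (h0 : ψ 0 ≤ 0) (h' : ψ 0 = 0 → ψ' < 0) : ∀ᶠ t in 𝓝[>] 0, ψ t ≤ 0 := by
  rcases h0.lt_or_eq with hlt | heq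
  · exact (hψ.continuousAt.tendsto.eventually_lt_const hlt).filter_mono nhdsWithin_le_nhds
      |>.mono fun _ => le_of_lt
  · filter_upwards [hψ.tendsto_slope_zero_right.eventually_lt_const (h' heq),
      self_mem_nhdsWithin] with t hslope (ht : 0 < t)
    rw [zero_add, heq, sub_zero, smul_eq_mul, inv_mul_lt_iff₀ ht, mul_zero] at hslope
    exact hslope.le

theorem mem_posTangentConeAt_of_forall_active_lt (hg : ∀ i, HasFDerivAt (g i) (g' i) y)
    (hy : ∀ i, g i y ≤ 0) {e : E} (he : ∀ i, g i y = 0 → g' i e < 0) :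
    e ∈ posTangentConeAt {w | ∀ i, g i w ≤ 0} y :=
  mem_posTangentConeAt_of_frequently_mem <| Eventually.frequently <| eventually_all.2 fun i =>
    eventually_nonpos_of_hasDerivAt ((hg i).hasLineDerivAt e) (by simpa using hy i)
      (by simpa using he i)

theorem IsMinOn.exists_kkt_multipliers (hf : HasFDerivAt f f' y)
    (hg : ∀ i, HasFDerivAt (g i) (g' i) y) (hy : ∀ i, g i y ≤ 0)
    (hmin : IsMinOn f {w | ∀ i, g i w ≤ 0} y) {d : E} (hd : ∀ i, g i y = 0 → g' i d < 0) :
    ∃ z : ι → ℝ, (∀ i, 0 ≤ z i) ∧ f' + ∑ i, z i • g' i = 0 ∧ ∀ i, z i * g i y = 0 := by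
  classical
  have hstrict : ∀ e, (∀ i, g i y = 0 → g' i e < 0) → 0 ≤ f' e := fun e he =>
    hmin.localize.hasFDerivWithinAt_nonneg hf.hasFDerivWithinAt
      (mem_posTangentConeAt_of_forall_active_lt hg hy he)
  -- `e + ε • d` is strictly feasible for every `ε > 0`.
  have hlinear : ∀ e, (∀ i, g i y = 0 → g' i e ≤ 0) → 0 ≤ f' e := by
    intro e he
    have hlim : Tendsto (fun ε : ℝ => f' (e + ε • d)) (𝓝 0) (𝓝 (f' e)) := by
      have : Continuous fun ε : ℝ => f' (e + ε • d) := by fun_prop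
      simpa using this.tendsto 0
    refine ge_of_tendsto (hlim.mono_left (nhdsWithin_le_nhds (s := Ioi 0))) ?_
    filter_upwards [self_mem_nhdsWithin] with ε (hε : 0 < ε)
    refine hstrict _ fun i hi => ?_
    simpa [map_add, map_smul] using add_neg_of_nonpos_of_neg (he i hi)
      (mul_neg_of_pos_of_neg hε (hd i hi))
  obtain ⟨z, hz, hzs, hzf⟩ := Module.Dual.exists_nonneg_eq_sum_smul_of_forall_nonpos
    (Finset.univ.filter fun i => g i y = 0) (fun i => (g' i : E →ₗ[ℝ] ℝ)) (-(f' : E →ₗ[ℝ] ℝ))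
    fun e he => neg_nonpos.2 <| hlinear e fun i hi => he i (by simpa using hi)
  refine ⟨z, hz, ?_, fun i => ?_⟩
  · ext e
    have := LinearMap.congr_fun hzf e
    rw [Finset.sum_filter_of_ne fun i _ hi => ?_] at this
    · simp only [LinearMap.neg_apply, ContinuousLinearMap.coe_coe, LinearMap.sum_apply,
        LinearMap.smul_apply] at this
      have : f' e + ∑ i, z i * g' i e = 0 := by simp only [smul_eq_mul] at this; linarith
      simpa using this
    · by_contra h
      exact hi (by rw [hzs i (by simpa using h), zero_smul])
  · by_cases hi : g i y = 0
    · rw [hi, mul_zero]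
    · rw [hzs i (by simpa using hi), zero_mul]

end KKT

theorem stmt_2_general
    {n m p q : ℕ}
    (F : Vec n → Vec m → ℝ) (G : Vec n → Vec m → Vec p)
    (f : Vec n → Vec m → ℝ) (g : Vec n → Vec m → Vec q)
    -- for every x ∈ X, the lower-level data is convex and C¹ in y
    (hconv : ∀ x : Vec n, (∃ y, ∀ j, G x y j ≤ 0) →
      ConvexOn ℝ Set.univ (f x) ∧ ContDiff ℝ 1 (f x) ∧
      ∀ i, ConvexOn ℝ Set.univ (fun y => g x y i) ∧ ContDiff ℝ 1 (fun y => g x y i))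
    -- LMFCQ holds at every (x, y) with x ∈ X and y ∈ S(x)
    (hLMFCQ : ∀ x : Vec n, (∃ y, ∀ j, G x y j ≤ 0) →
      ∀ y : Vec m, (∀ i, g x y i ≤ 0) →
      (∀ y', (∀ i, g x y' i ≤ 0) → f x y ≤ f x y') →
      ∃ d : Vec m, ∀ i, g x y i = 0 → fderiv ℝ (fun y' => g x y' i) y d < 0)
    (xb : Vec n) (yb : Vec m) (zb : Vec q)
    -- (xb, yb, zb) is feasible for (KKTR)
    (hKfeas : (∀ j, G xb yb j ≤ 0) ∧
      (fderiv ℝ (f xb) yb + ∑ i, zb i • fderiv ℝ (fun y' => g xb y' i) yb = 0) ∧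
      (∀ i, g xb yb i ≤ 0) ∧ (∀ i, 0 ≤ zb i) ∧ ∑ i, zb i * g xb yb i = 0)
    -- (xb, yb, zb) is globally optimal for (KKTR)
    (hKopt : ∀ (x : Vec n) (y : Vec m) (z : Vec q), (∀ j, G x y j ≤ 0) →
      (fderiv ℝ (f x) y + ∑ i, z i • fderiv ℝ (fun y' => g x y' i) y = 0) →
      (∀ i, g x y i ≤ 0) → (∀ i, 0 ≤ z i) → (∑ i, z i * g x y i = 0) →
      F xb yb ≤ F x y) :
    -- (xb, yb) is a global optimal solution of (P)
    ((∀ j, G xb yb j ≤ 0) ∧ (∀ i, g xb yb i ≤ 0) ∧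
      ∀ y', (∀ i, g xb y' i ≤ 0) → f xb yb ≤ f xb y') ∧
    ∀ (x : Vec n) (y : Vec m), (∀ j, G x y j ≤ 0) → (∀ i, g x y i ≤ 0) →
      (∀ y', (∀ i, g x y' i ≤ 0) → f x y ≤ f x y') → F xb yb ≤ F x y := by
  have hasFDerivAt {φ : Vec m → ℝ} (hφ : ContDiff ℝ 1 φ) (y : Vec m) :
      HasFDerivAt φ (fderiv ℝ φ y) y :=
    (hφ.differentiable one_ne_zero y).hasFDerivAt
  obtain ⟨hG, hstat, hgb, hzb, hcompl⟩ := hKfeas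
  obtain ⟨hfb, hfb', hgb'⟩ := hconv xb ⟨yb, hG⟩
  have hminb := ConvexOn.isMinOn_of_kkt (g := fun i y => g xb y i) hfb (fun i => (hgb' i).1)
    (hasFDerivAt hfb' yb) (fun i => hasFDerivAt (hgb' i).2 yb) hzb hstat hcompl
  refine ⟨⟨hG, hgb, isMinOn_iff.1 hminb⟩, fun x y hGxy hgxy hmin => ?_⟩
  obtain ⟨-, hf', hg'⟩ := hconv x ⟨y, hGxy⟩
  obtain ⟨d, hd⟩ := hLMFCQ x ⟨y, hGxy⟩ y hgxy hmin
  obtain ⟨z, hz, hstat, hcompl⟩ := IsMinOn.exists_kkt_multipliers (g := fun i y => g x y i)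
    (hasFDerivAt hf' y) (fun i => hasFDerivAt (hg' i).2 y) hgxy (isMinOn_iff.2 hmin) hd
  exact hKopt x y z hGxy hstat hgxy hz (Finset.sum_eq_zero fun i _ => hcompl i)

/-- Under lower-level convexity, smoothness and LMFCQ (at every
lower-level optimal point over `X`), a global optimal solution `(x̄, ȳ, z̄)` of the
KKT reformulation (KKTR) yields a global optimal solution `(x̄, ȳ)` of the bilevel
problem (P). -/
theorem stmt_2
    {n m p q : ℕ} (hn : 0 < n) (hm : 0 < m) (hp : 0 < p) (hq : 0 < q)
    (F : Vec n → Vec m → ℝ) (G : Vec n → Vec m → Vec p)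
    (f : Vec n → Vec m → ℝ) (g : Vec n → Vec m → Vec q)
    -- G does not depend on y
    (hGy : ∀ x y y', G x y = G x y')
    -- for every x ∈ X, the lower-level data is convex and C¹ in y
    (hconv : ∀ x : Vec n, (∃ y, ∀ j, G x y j ≤ 0) →
      ConvexOn ℝ Set.univ (f x) ∧ ContDiff ℝ 1 (f x) ∧
      ∀ i, ConvexOn ℝ Set.univ (fun y => g x y i) ∧ ContDiff ℝ 1 (fun y => g x y i))
    -- standing assumption: S(x) ≠ ∅ for every x ∈ X
    (hS : ∀ x : Vec n, (∃ y, ∀ j, G x y j ≤ 0) →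
      ∃ y, (∀ i, g x y i ≤ 0) ∧ ∀ y', (∀ i, g x y' i ≤ 0) → f x y ≤ f x y')
    -- LMFCQ holds at every (x, y) with x ∈ X and y ∈ S(x)
    (hLMFCQ : ∀ x : Vec n, (∃ y, ∀ j, G x y j ≤ 0) →
      ∀ y : Vec m, (∀ i, g x y i ≤ 0) →
      (∀ y', (∀ i, g x y' i ≤ 0) → f x y ≤ f x y') →
      ∃ d : Vec m, ∀ i, g x y i = 0 → fderiv ℝ (fun y' => g x y' i) y d < 0)
    (xb : Vec n) (yb : Vec m) (zb : Vec q)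
    -- (xb, yb, zb) is feasible for (KKTR)
    (hKfeas : (∀ j, G xb yb j ≤ 0) ∧
      (fderiv ℝ (f xb) yb + ∑ i, zb i • fderiv ℝ (fun y' => g xb y' i) yb = 0) ∧
      (∀ i, g xb yb i ≤ 0) ∧ (∀ i, 0 ≤ zb i) ∧ ∑ i, zb i * g xb yb i = 0)
    -- (xb, yb, zb) is globally optimal for (KKTR)
    (hKopt : ∀ (x : Vec n) (y : Vec m) (z : Vec q), (∀ j, G x y j ≤ 0) →
      (fderiv ℝ (f x) y + ∑ i, z i • fderiv ℝ (fun y' => g x y' i) y = 0) →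
      (∀ i, g x y i ≤ 0) → (∀ i, 0 ≤ z i) → (∑ i, z i * g x y i = 0) →
      F xb yb ≤ F x y) :
    -- (xb, yb) is a global optimal solution of (P)
    ((∀ j, G xb yb j ≤ 0) ∧ (∀ i, g xb yb i ≤ 0) ∧
      ∀ y', (∀ i, g xb y' i ≤ 0) → f xb yb ≤ f xb y') ∧
    ∀ (x : Vec n) (y : Vec m), (∀ j, G x y j ≤ 0) → (∀ i, g x y i ≤ 0) →
      (∀ y', (∀ i, g x y' i ≤ 0) → f x y ≤ f x y') → F xb yb ≤ F x y :=
  stmt_2_general F G f g hconv hLMFCQ xb yb zb hKfeas hKopt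
end

section
/- Let f and g be continuously differentiable and let ȳ ∈ S(x̄). If S is inner semicontinuous at (x̄,ȳ) — i.e., for every sequence x_k → x̄ there exist y_k ∈ S(x_k) with y_k → ȳ — and the LMFCQ holds at (x̄,ȳ), then the lower-level value function φ is Lipschitz continuous on some neighborhood of x̄. -/
open Topology Filter

/-- The lower-level optimal value function `φ(x) = inf {f(x,y) : g(x,y) ≤ 0}`,
with values in the extended reals (`+∞` if the lower-level feasible set is empty). -/
noncomputable def phi {n m q : ℕ} (f : Vec n → Vec m → ℝ) (g : Vec n → Vec m → Vec q)
    (x : Vec n) : EReal :=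
  ⨅ y ∈ {y : Vec m | ∀ i, g x y i ≤ 0}, (f x y : EReal)

/-!
Near `(x̄, ȳ)` the LMFCQ direction `d` decreases every active constraint at a uniform rate
`c > 0`, while the inactive constraints stay negative. So if `y` is feasible for `x₂`, then
`y + t • d` with `t = (Lg / c) * dist x₁ x₂`, where `Lg` is a local Lipschitz constant of `g`,
is feasible for `x₁`: the decrease `c * t` absorbs the change `Lg * dist x₁ x₂` caused by moving
from `x₂` to `x₁`, and the objective grows by at most a multiple of `dist x₁ x₂`. Inner
semicontinuity provides minimisers `y ∈ S(x₂)` close to `ȳ`, to which this applies, so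
`φ(x₁) ≤ φ(x₂) + L * dist x₁ x₂` near `x̄`; by symmetry `φ` is Lipschitz there.
-/

open Set Metric
open scoped NNReal

theorem eventually_inter_nonempty_of_forall_seq {X Y : Type*} [TopologicalSpace X]
    [FirstCountableTopology X] [TopologicalSpace Y] {S : X → Set Y} {x₀ : X} {y₀ : Y}
    (hS : ∀ x : ℕ → X, Tendsto x atTop (𝓝 x₀) →
      ∃ y : ℕ → Y, (∀ k, y k ∈ S (x k)) ∧ Tendsto y atTop (𝓝 y₀))
    {V : Set Y} (hV : V ∈ 𝓝 y₀) : ∀ᶠ x in 𝓝 x₀, (S x ∩ V).Nonempty := by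
  by_contra hc
  obtain ⟨x, hx, hxV⟩ := exists_seq_forall_of_frequently (not_eventually.1 hc)
  obtain ⟨y, hyS, hy⟩ := hS x hx
  obtain ⟨k, hk⟩ := (hy.eventually hV).exists
  exact hxV k ⟨y k, hyS k, hk⟩

theorem EReal.iInf_coe_eq_of_isLeast {Y : Type*} {s : Set Y} {h : Y → ℝ} {a : ℝ}
    (ha : IsLeast (h '' s) a) : ⨅ y ∈ s, (h y : EReal) = a := by
  obtain ⟨y, hy, rfl⟩ := ha.1
  exact le_antisymm (iInf₂_le y hy)
    (le_iInf₂ fun y' hy' => EReal.coe_le_coe_iff.2 (ha.2 ⟨y', hy', rfl⟩))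

theorem exists_lipschitzOnWith_isLeast_image {X Y : Type*} [PseudoMetricSpace X]
    {M : X → Set Y} {f : X → Y → ℝ} {U : Set X} {V : Set Y} {L : ℝ}
    (hmin : ∀ x ∈ U, ∃ y ∈ V, y ∈ M x ∧ ∀ y' ∈ M x, f x y ≤ f x y')
    (htransfer : ∀ x₁ ∈ U, ∀ x₂ ∈ U, ∀ y ∈ V, y ∈ M x₂ →
      ∃ y' ∈ M x₁, f x₁ y' ≤ f x₂ y + L * dist x₁ x₂) :
    ∃ ψ : X → ℝ, LipschitzOnWith (Real.toNNReal L) ψ U ∧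
      ∀ x ∈ U, IsLeast (f x '' M x) (ψ x) := by
  have hleast : ∀ x ∈ U, ∃ y ∈ V, y ∈ M x ∧ IsLeast (f x '' M x) (f x y) := fun x hx =>
    (hmin x hx).imp fun y ⟨hyV, hyM, hy⟩ =>
      ⟨hyV, hyM, mem_image_of_mem _ hyM, forall_mem_image.2 hy⟩
  refine ⟨fun x => sInf (f x '' M x),
    LipschitzOnWith.of_le_add_mul' L fun x₁ hx₁ x₂ hx₂ => ?_, fun x hx => ?_⟩
  · obtain ⟨_, -, -, hy₁⟩ := hleast x₁ hx₁
    obtain ⟨y₂, hy₂V, hy₂M, hy₂⟩ := hleast x₂ hx₂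
    obtain ⟨y', hy'M, hy'⟩ := htransfer x₁ hx₁ x₂ hx₂ y₂ hy₂V hy₂M
    rw [hy₂.csInf_eq]
    exact (csInf_le hy₁.bddBelow (mem_image_of_mem _ hy'M)).trans hy'
  · obtain ⟨_, -, -, hy⟩ := hleast x hx
    rwa [← hy.csInf_eq] at hy

section NormedSpace

variable {E F P : Type*} [NormedAddCommGroup E] [NormedSpace ℝ E] [NormedAddCommGroup F]
  [NormedSpace ℝ F] [NormedAddCommGroup P] [NormedSpace ℝ P]

theorem fderiv_comp_prodMk_right_apply {H : Type*} [NormedAddCommGroup H] [NormedSpace ℝ H]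
    {h : E × F → H} {x : E} {y : F} (hh : DifferentiableAt ℝ h (x, y)) (d : F) :
    fderiv ℝ (fun y' => h (x, y')) y d = fderiv ℝ h (x, y) (0, d) := by
  show fderiv ℝ (h ∘ Prod.mk x) y d = _
  rw [(hh.hasFDerivAt.comp y (hasFDerivAt_prodMk_right x y)).fderiv]
  rfl

theorem Convex.le_sub_mul_of_fderiv_apply_le {h : P → ℝ} {W : Set P} {p v : P} {t c : ℝ}
    (hW : Convex ℝ W) (hdiff : ∀ z ∈ W, DifferentiableAt ℝ h z)
    (hderiv : ∀ z ∈ W, fderiv ℝ h z v ≤ -c)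
    (ht : 0 ≤ t) (hp : p ∈ W) (hpt : p + t • v ∈ W) : h (p + t • v) ≤ h p - c * t := by
  obtain ⟨z, hz, hmvt⟩ :=
    domain_mvt (fun z hz => (hdiff z hz).hasFDerivAt.hasFDerivWithinAt) hW hp hpt
  rw [add_sub_cancel_left, map_smul, smul_eq_mul] at hmvt
  nlinarith [hderiv z (hW.segment_subset hp hpt hz)]

theorem LipschitzOnWith.nonpos_add_smul_of_fderiv_apply_le {h : P → ℝ} {W : Set P} {L : ℝ≥0}
    {c : ℝ} {p₁ p₂ v : P} (hlip : LipschitzOnWith L h W) (hW : Convex ℝ W)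
    (hdiff : ∀ z ∈ W, DifferentiableAt ℝ h z) (hderiv : ∀ z ∈ W, fderiv ℝ h z v ≤ -c)
    (hc : 0 < c) (hp₁ : p₁ ∈ W) (hp₂ : p₂ ∈ W) (hp₁v : p₁ + (L / c * dist p₁ p₂) • v ∈ W)
    (hp₂_nonpos : h p₂ ≤ 0) : h (p₁ + (L / c * dist p₁ p₂) • v) ≤ 0 := by
  have hdescent := hW.le_sub_mul_of_fderiv_apply_le hdiff hderiv (by positivity) hp₁ hp₁v
  have hct : c * (L / c * dist p₁ p₂) = L * dist p₁ p₂ := by field_simp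
  linarith [hlip.le_add_mul hp₁ hp₂]

theorem exists_pos_eventually_fderiv_apply_lt {ι : Type*} [Fintype ι] {G : P → ι → ℝ}
    {p₀ v : P} (hG : ContDiffAt ℝ 1 G p₀) (hfeas : G p₀ ≤ 0)
    (hmfcq : ∀ i, G p₀ i = 0 → fderiv ℝ (fun p => G p i) p₀ v < 0) :
    ∃ c > 0, ∀ᶠ p in 𝓝 p₀, ∀ i, DifferentiableAt ℝ (fun p => G p i) p ∧
      (G p₀ i < 0 → G p i < 0) ∧ (G p₀ i = 0 → fderiv ℝ (fun p => G p i) p v < -c) := by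
  have hGi := contDiffAt_pi.1 hG
  have hsmall : ∀ᶠ c in 𝓝[>] (0 : ℝ),
      ∀ i, G p₀ i = 0 → fderiv ℝ (fun p => G p i) p₀ v < -c :=
    eventually_all.2 fun i => nhdsWithin_le_nhds <| eventually_imp_distrib_left.2 fun hi =>
      (eventually_lt_nhds (neg_pos.2 (hmfcq i hi))).mono fun _ hc => lt_neg.2 hc
  obtain ⟨c, hmargin, hc⟩ := (hsmall.and self_mem_nhdsWithin).exists
  refine ⟨c, hc, eventually_all.2 fun i => ?_⟩
  have hdiff : ∀ᶠ p in 𝓝 p₀, DifferentiableAt ℝ (fun p => G p i) p :=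
    ((hGi i).eventually (by simp)).mono fun p hp => hp.differentiableAt one_ne_zero
  have hderiv : ContinuousAt (fun p => fderiv ℝ (fun p => G p i) p v) p₀ :=
    ((hGi i).fderiv_right (m := 0) (by simp)).continuousAt.clm_apply continuousAt_const
  rcases (hfeas i).lt_or_eq with hi | hi
  · filter_upwards [hdiff, (hGi i).continuousAt.eventually_lt continuousAt_const hi]
      with p hpd hp
    exact ⟨hpd, fun _ => hp, fun h => absurd h hi.ne⟩
  · filter_upwards [hdiff, hderiv.eventually_lt continuousAt_const (hmargin i hi)]
      with p hpd hp
    exact ⟨hpd, fun h => absurd hi h.ne, fun _ => hp⟩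

theorem exists_feasible_le_add_mul_dist_of_mfcq {ι : Type*} [Fintype ι] {f : E × F → ℝ}
    {G : E × F → ι → ℝ} {x₀ : E} {y₀ d : F} (hf : ContDiffAt ℝ 1 f (x₀, y₀))
    (hG : ContDiffAt ℝ 1 G (x₀, y₀)) (hfeas : G (x₀, y₀) ≤ 0)
    (hmfcq : ∀ i, G (x₀, y₀) i = 0 → fderiv ℝ (fun p => G p i) (x₀, y₀) (0, d) < 0) :
    ∃ L : ℝ, ∃ U ∈ 𝓝 x₀, ∃ V ∈ 𝓝 y₀, ∀ x₁ ∈ U, ∀ x₂ ∈ U, ∀ y ∈ V,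
      G (x₂, y) ≤ 0 → ∃ y', G (x₁, y') ≤ 0 ∧ f (x₁, y') ≤ f (x₂, y) + L * dist x₁ x₂ := by
  obtain ⟨c, hc, hnear_mfcq⟩ := exists_pos_eventually_fderiv_apply_lt hG hfeas hmfcq
  obtain ⟨Lg, Tg, hTg, hGlip⟩ := hG.exists_lipschitzOnWith
  obtain ⟨Lf, Tf, hTf, hflip⟩ := hf.exists_lipschitzOnWith
  obtain ⟨ρ, hρ, hball⟩ := Metric.mem_nhds_iff.1 (inter_mem (inter_mem hnear_mfcq hTg) hTf)
  set W := ball (x₀, y₀) ρ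
  set K := (Lg : ℝ) / c
  have hW : W ∈ 𝓝 (x₀, y₀) := ball_mem_nhds _ hρ
  have hnear : ∀ᶠ z : E × E × F in 𝓝 (x₀, x₀, y₀),
      z.2 ∈ W ∧ (z.1, z.2.2) ∈ W ∧ (z.1, z.2.2 + (K * dist z.1 z.2.1) • d) ∈ W := by
    refine ((continuous_snd.tendsto (x₀, x₀, y₀)).eventually hW).and
      (((Continuous.tendsto' ?_ _ _ ?_).eventually hW).and
        ((Continuous.tendsto' ?_ _ _ ?_).eventually hW))
    all_goals first | fun_prop | simp
  obtain ⟨δ, hδ, hδW⟩ := Metric.eventually_nhds_iff.1 hnear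
  refine ⟨Lf * (1 + K * ‖d‖), ball x₀ δ, ball_mem_nhds _ hδ, ball y₀ δ, ball_mem_nhds _ hδ,
    fun x₁ hx₁ x₂ hx₂ y hy hfeas₂ => ?_⟩
  set t := K * dist x₁ x₂
  have ht : 0 ≤ t := by positivity
  obtain ⟨h₂, h₁, h₁t⟩ : (x₂, y) ∈ W ∧ (x₁, y) ∈ W ∧ (x₁, y + t • d) ∈ W :=
    @hδW (x₁, x₂, y) (by simp only [Prod.dist_eq]; exact max_lt hx₁ (max_lt hx₂ hy))
  refine ⟨y + t • d, fun i => ?_, ?_⟩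
  · rcases (hfeas i).lt_or_eq with hi | hi
    · exact (((hball h₁t).1.1 i).2.1 hi).le
    have hlip : LipschitzOnWith Lg (fun p => G p i) W := by
      have := (LipschitzWith.eval i).comp_lipschitzOnWith (hGlip.mono fun p hp => (hball hp).1.2)
      rwa [one_mul] at this
    have hdist₁₂ : dist (x₁, y) (x₂, y) = dist x₁ x₂ := by simp [Prod.dist_eq]
    have h₁t' : (x₁, y) + (Lg / c * dist (x₁, y) (x₂, y)) • ((0 : E), d) ∈ W := by
      simpa only [hdist₁₂, Prod.smul_mk, smul_zero, Prod.mk_add_mk, add_zero] using h₁t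
    simpa [hdist₁₂] using hlip.nonpos_add_smul_of_fderiv_apply_le (convex_ball _ _)
      (fun z hz => ((hball hz).1.1 i).1) (fun z hz => (((hball hz).1.1 i).2.2 hi).le) hc
      h₁ h₂ h₁t' (hfeas₂ i)
  · have hdist : dist (x₁, y + t • d) (x₂, y) ≤ (1 + K * ‖d‖) * dist x₁ x₂ := by
      rw [Prod.dist_eq, dist_self_add_left, norm_smul, Real.norm_of_nonneg ht]
      exact max_le (by nlinarith [dist_nonneg (x := x₁) (y := x₂), norm_nonneg d])
        (by nlinarith [dist_nonneg (x := x₁) (y := x₂)])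
    calc f (x₁, y + t • d) ≤ f (x₂, y) + Lf * dist (x₁, y + t • d) (x₂, y) :=
          hflip.le_add_mul (hball h₁t).2 (hball h₂).2
      _ ≤ f (x₂, y) + Lf * (1 + K * ‖d‖) * dist x₁ x₂ := by
          rw [mul_assoc]; gcongr

end NormedSpace

theorem stmt_8_general
    {n m q : ℕ}
    (f : Vec n → Vec m → ℝ) (g : Vec n → Vec m → Vec q)
    -- f and g are continuously differentiable
    (hf : ContDiff ℝ 1 (fun pq : Vec n × Vec m => f pq.1 pq.2))
    (hg : ContDiff ℝ 1 (fun pq : Vec n × Vec m => g pq.1 pq.2))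
    (xb : Vec n) (yb : Vec m)
    -- yb ∈ S(xb)
    (hyb : (∀ i, g xb yb i ≤ 0) ∧ ∀ y', (∀ i, g xb y' i ≤ 0) → f xb yb ≤ f xb y')
    -- S is inner semicontinuous at (xb, yb)
    (hisc : ∀ xk : ℕ → Vec n, Tendsto xk atTop (𝓝 xb) →
      ∃ yk : ℕ → Vec m,
        (∀ k, (∀ i, g (xk k) (yk k) i ≤ 0) ∧
          ∀ y', (∀ i, g (xk k) y' i ≤ 0) → f (xk k) (yk k) ≤ f (xk k) y') ∧
        Tendsto yk atTop (𝓝 yb))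
    -- LMFCQ holds at (xb, yb)
    (hLMFCQ : ∃ d : Vec m, ∀ i, g xb yb i = 0 →
      fderiv ℝ (fun y => g xb y i) yb d < 0) :
    -- φ is Lipschitz continuous on some neighborhood of xb
    ∃ (K : NNReal) (U : Set (Vec n)) (ψ : Vec n → ℝ), U ∈ 𝓝 xb ∧
      LipschitzOnWith K ψ U ∧ ∀ x ∈ U, (ψ x : EReal) = phi f g x := by
  obtain ⟨d, hd⟩ := hLMFCQ
  have hmfcq : ∀ i, g xb yb i = 0 →
      fderiv ℝ (fun p : Vec n × Vec m => g p.1 p.2 i) (xb, yb) (0, d) < 0 := fun i hi => by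
    rw [← fderiv_comp_prodMk_right_apply ((contDiff_pi.1 hg i).differentiable one_ne_zero _)]
    exact hd i hi
  obtain ⟨L, U, hU, V, hV, htransfer⟩ :=
    exists_feasible_le_add_mul_dist_of_mfcq hf.contDiffAt hg.contDiffAt hyb.1 hmfcq
  set S : Vec n → Set (Vec m) :=
    fun x => {y | (∀ i, g x y i ≤ 0) ∧ ∀ y', (∀ i, g x y' i ≤ 0) → f x y ≤ f x y'}
  have hsol : ∀ᶠ x in 𝓝 xb, (S x ∩ V).Nonempty :=
    eventually_inter_nonempty_of_forall_seq hisc hV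
  obtain ⟨ψ, hψ, hleast⟩ := exists_lipschitzOnWith_isLeast_image
    (M := fun x => {y | ∀ i, g x y i ≤ 0}) (U := U ∩ {x | (S x ∩ V).Nonempty})
    (fun x ⟨_, y, ⟨hyM, hymin⟩, hyV⟩ => ⟨y, hyV, hyM, hymin⟩)
    (fun x₁ hx₁ x₂ hx₂ => htransfer x₁ hx₁.1 x₂ hx₂.1)
  exact ⟨_, _, ψ, inter_mem hU hsol, hψ,
    fun x hx => (EReal.iInf_coe_eq_of_isLeast (hleast x hx)).symm⟩

/-- If the lower-level solution map `S` is inner semicontinuous at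
`(x̄, ȳ)` and the LMFCQ holds there, then the value function `φ` is Lipschitz
continuous on some neighborhood of `x̄`. -/
theorem stmt_8
    {n m q : ℕ} (hn : 0 < n) (hm : 0 < m) (hq : 0 < q)
    (f : Vec n → Vec m → ℝ) (g : Vec n → Vec m → Vec q)
    -- f and g are continuously differentiable
    (hf : ContDiff ℝ 1 (fun pq : Vec n × Vec m => f pq.1 pq.2))
    (hg : ContDiff ℝ 1 (fun pq : Vec n × Vec m => g pq.1 pq.2))
    (xb : Vec n) (yb : Vec m)
    -- yb ∈ S(xb)
    (hyb : (∀ i, g xb yb i ≤ 0) ∧ ∀ y', (∀ i, g xb y' i ≤ 0) → f xb yb ≤ f xb y')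
    -- S is inner semicontinuous at (xb, yb)
    (hisc : ∀ xk : ℕ → Vec n, Tendsto xk atTop (𝓝 xb) →
      ∃ yk : ℕ → Vec m,
        (∀ k, (∀ i, g (xk k) (yk k) i ≤ 0) ∧
          ∀ y', (∀ i, g (xk k) y' i ≤ 0) → f (xk k) (yk k) ≤ f (xk k) y') ∧
        Tendsto yk atTop (𝓝 yb))
    -- LMFCQ holds at (xb, yb)
    (hLMFCQ : ∃ d : Vec m, ∀ i, g xb yb i = 0 →
      fderiv ℝ (fun y => g xb y i) yb d < 0) :
    -- φ is Lipschitz continuous on some neighborhood of xb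
    ∃ (K : NNReal) (U : Set (Vec n)) (ψ : Vec n → ℝ), U ∈ 𝓝 xb ∧
      LipschitzOnWith K ψ U ∧ ∀ x ∈ U, (ψ x : EReal) = phi f g x :=
  stmt_8_general f g hf hg xb yb hyb hisc hLMFCQ
end

section
/- Let x̄ be a local minimizer of the problem (Q): minimize f̃(x) subject to γ(x) = 0, g̃(x) ≤ 0, h̃(x) = 0. Then (Q) is partially calm on γ at x̄ if and only if there exists λ > 0 such that x̄ is a local minimizer of f̃(x) + λ|γ(x)| over the set {x : g̃(x) ≤ 0, h̃(x) = 0}. -/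
/-- partial exact penalization, Ye–Zhu–Zhu. A local minimizer `x̄`
of problem (Q): `min f̃(x) s.t. γ(x) = 0, g̃(x) ≤ 0, h̃(x) = 0` is partially calm on
`γ` at `x̄` if and only if for some `λ > 0`, `x̄` is a local minimizer of
`f̃(x) + λ|γ(x)|` over `{x : g̃(x) ≤ 0, h̃(x) = 0}`. -/
theorem stmt_9
    {N P Q : ℕ} (hN : 0 < N) (hP : 0 < P) (hQ : 0 < Q)
    (ft : Vec N → ℝ) (gt : Vec N → Vec P) (ht : Vec N → Vec Q)
    (γ : Vec N → ℝ)
    (hft : ContDiff ℝ 1 ft) (hgt : ContDiff ℝ 1 gt) (hht : ContDiff ℝ 1 ht)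
    (hγ : LocallyLipschitz γ)
    (xb : Vec N)
    -- xb is feasible for (Q)
    (hfeas : γ xb = 0 ∧ (∀ j, gt xb j ≤ 0) ∧ ∀ j, ht xb j = 0)
    -- xb is a local minimizer of (Q)
    (hloc : ∃ ε > (0 : ℝ), ∀ x : Vec N, ‖x - xb‖ < ε → γ x = 0 →
      (∀ j, gt x j ≤ 0) → (∀ j, ht x j = 0) → ft xb ≤ ft x) :
    -- partial calmness on γ at xb ...
    (∃ δ > (0 : ℝ), ∃ lam > (0 : ℝ), ∀ σ : ℝ, |σ| < δ → ∀ x : Vec N, ‖x - xb‖ < δ →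
      γ x + σ = 0 → (∀ j, gt x j ≤ 0) → (∀ j, ht x j = 0) →
      0 ≤ ft x - ft xb + lam * |σ|)
    ↔
    -- ... iff exact penalization holds for some λ > 0
    (∃ lam > (0 : ℝ), ∃ ε > (0 : ℝ), ∀ x : Vec N, ‖x - xb‖ < ε →
      (∀ j, gt x j ≤ 0) → (∀ j, ht x j = 0) →
      ft xb + lam * |γ xb| ≤ ft x + lam * |γ x|) := by
  obtain ⟨hγ0, hg0, hh0⟩ := hfeas
  constructor
  · rintro ⟨δ, hδ, lam, hlam, H⟩
    have hc : ContinuousAt γ xb := hγ.continuous.continuousAt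
    obtain ⟨ε, hε, hεδ⟩ := Metric.continuousAt_iff.mp hc δ hδ
    refine ⟨lam, hlam, min ε δ, lt_min hε hδ, fun x hx hg hh => ?_⟩
    have hxε : dist x xb < ε := by
      rw [dist_eq_norm]; exact lt_of_lt_of_le hx (min_le_left _ _)
    have hγx : |γ x| < δ := by
      have := hεδ hxε
      rwa [Real.dist_eq, hγ0, sub_zero] at this
    have hxδ : ‖x - xb‖ < δ := lt_of_lt_of_le hx (min_le_right _ _)
    have := H (-(γ x)) (by rwa [abs_neg]) x hxδ (by ring) hg hh
    rw [abs_neg] at this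
    rw [hγ0]
    simp only [abs_zero, mul_zero, add_zero]
    linarith
  · rintro ⟨lam, hlam, ε, hε, H⟩
    refine ⟨ε, hε, lam, hlam, fun σ hσ x hx hγσ hg hh => ?_⟩
    have := H x hx hg hh
    rw [hγ0] at this
    have hγx : γ x = -σ := by linarith
    rw [hγx, abs_neg] at this
    simp only [abs_zero, mul_zero, add_zero] at this
    linarith
end

section
/- Let F, G, f, g be continuously differentiable and let f and each g_i, i = 1,…,q, be convex as functions of the joint variable (x,y). Let (x̄,ȳ) be a local optimal solution of (LLVFR), suppose (LLVFR) is partially calm on (x,y) ↦ f(x,y) − φ(x) at (x̄,ȳ), and assume both the LMFCQ and the LLVF-MFCQ hold at (x̄,ȳ). Then there exist λ > 0, u ∈ ℝᵖ, v, w ∈ ℝ^q and z ∈ ℝᵐ such that: (a) ∇F(x̄,ȳ) + ∇G(x̄,ȳ)ᵀu + ∇g(x̄,ȳ)ᵀv + λ∇f(x̄,ȳ) − λ(∇_x f(x̄,z) + ∇_x g(x̄,z)ᵀw, 0) = 0; (b) ∇_y f(x̄,z) + ∇_y g(x̄,z)ᵀw = 0; (c) u ≥ 0, G(x̄,ȳ)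 ≤ 0, uᵀG(x̄,ȳ) = 0; (d) v ≥ 0, g(x̄,ȳ) ≤ 0, vᵀg(x̄,ȳ) = 0; (e) w ≥ 0, g(x̄,z) ≤ 0, wᵀg(x̄,z) = 0. -/
/-!
Feasibility of `(xb, yb)` forces `φ(xb) = f(xb, yb)`, so `yb` solves the lower-level problem at
`xb` and the LMFCQ yields lower-level KKT multipliers `w`. The Lagrangian `f + wᵀg` is jointly
convex and its tangent plane at `(xb, yb)` is flat in `y`; hence `φ(x) ≥ f(xb, yb) + c (x - xb)`
with `c = ∇ₓ(f + wᵀg)(xb, yb)`. Replacing `φ` by this affine minorant in the partially calm penalty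
problem leaves the smooth problem `min F + λ f - λ c (x - xb)` s.t. `G ≤ 0, g ≤ 0`, which
`(xb, yb)` solves locally. Its KKT conditions under the LLVF-MFCQ give (a), (c), (d), and the
lower-level KKT conditions give (b), (e), with `z = yb`.

The KKT theorem itself comes from Fermat's rule along MFCQ directions together with Gordan's
alternative, obtained by separating the negative orthant from the range of the derivatives.
-/

open Set Filter Topology

theorem exists_nonneg_sum_smul_eq_zero_of_forall_exists_nonneg
    {E ι : Type*} [AddCommGroup E] [Module ℝ E] [TopologicalSpace E] [Fintype ι]
    (a : ι → StrongDual ℝ E) (A : Set ι) (h : ∀ d, ∃ i ∈ A, 0 ≤ a i d) :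
    ∃ μ : ι → ℝ, (∀ i, 0 ≤ μ i) ∧ (∀ i ∉ A, μ i = 0) ∧ μ ≠ 0 ∧ ∑ i, μ i • a i = 0 := by
  classical
  set T : E →ₗ[ℝ] ι → ℝ := LinearMap.pi fun i => (a i : E →ₗ[ℝ] ℝ)
  set N : Set (ι → ℝ) := A.pi fun _ => Iio 0
  have hdisj : Disjoint N (LinearMap.range T) := by
    rw [Set.disjoint_left]
    rintro _ hN ⟨d, rfl⟩
    obtain ⟨i, hi, hd⟩ := h d
    exact (hN i hi).not_ge hd
  obtain ⟨φ, u, hφN, hφT⟩ := geometric_hahn_banach_open (convex_pi fun _ _ => convex_Iio 0)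
    (isOpen_set_pi A.toFinite fun _ _ => isOpen_Iio) (LinearMap.range T).convex hdisj
  have hu : u ≤ 0 := by simpa using hφT 0 (LinearMap.range T).zero_mem
  -- a linear functional bounded below on a subspace vanishes there
  have hφT0 : ∀ d, φ (T d) = 0 := by
    intro d
    by_contra hne
    have := hφT _ ⟨((u - 1) / φ (T d)) • d, rfl⟩
    rw [map_smul, map_smul, smul_eq_mul, div_mul_cancel₀ _ hne] at this
    linarith
  have hφcl : ∀ v ∈ A.pi fun _ => Iic (0 : ℝ), φ v ≤ 0 := by
    have : closure N ⊆ {v | φ v ≤ 0} :=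
      closure_minimal (fun v hv => ((hφN v hv).trans_le hu).le)
        (isClosed_le φ.continuous continuous_const)
    rw [closure_pi_set] at this
    simp only [closure_Iio] at this
    exact fun v hv => this hv
  set μ : ι → ℝ := fun i => φ (Pi.single i 1)
  have hrepr : ∀ v, φ v = ∑ i, v i * μ i := by
    intro v
    conv_lhs => rw [← Finset.univ_sum_single v, map_sum]
    refine Finset.sum_congr rfl fun i _ => ?_
    rw [← smul_eq_mul, ← map_smul, ← Pi.single_smul', smul_eq_mul, mul_one]
  have hμ_nonneg : ∀ i, 0 ≤ μ i := by
    intro i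
    have hmem : Pi.single i (-1 : ℝ) ∈ A.pi fun _ => Iic (0 : ℝ) := fun j _ => by
      by_cases hji : j = i <;> simp [hji]
    have := hφcl _ hmem
    rw [Pi.single_neg, map_neg] at this
    linarith
  refine ⟨μ, hμ_nonneg, fun i hi => (hφcl _ fun j hj => ?_).antisymm (hμ_nonneg i),
    fun hμ => ?_, ?_⟩
  · simp [show j ≠ i from fun h => hi (h ▸ hj)]
  · have := hφN (fun _ => -1) fun _ _ => show (-1 : ℝ) < 0 by norm_num
    simp [hrepr, hμ] at this
    linarith
  · ext d
    simpa [hrepr, mul_comm, T] using hφT0 d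

section Calculus

variable {E : Type*} [NormedAddCommGroup E] [NormedSpace ℝ E]

theorem HasDerivAt.eventually_nhdsGT_lt {h : ℝ → ℝ} {h' a : ℝ} (hd : HasDerivAt h h' a)
    (hneg : h' < 0) : ∀ᶠ t in 𝓝[>] a, h t < h a := by
  filter_upwards [hd.hasDerivWithinAt.limsup_slope_le' (lt_irrefl a) hneg, self_mem_nhdsWithin]
    with t hslope (ht : a < t)
  rw [slope_def_field, div_lt_iff₀ (sub_pos.2 ht)] at hslope
  linarith

theorem HasFDerivAt.hasDerivAt_add_smul {h : E → ℝ} {h' : StrongDual ℝ E} {x : E}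
    (hd : HasFDerivAt h h' x) (d : E) : HasDerivAt (fun t : ℝ => h (x + t • d)) (h' d) 0 := by
  have hline : HasDerivAt (fun t : ℝ => x + t • d) d 0 := by
    simpa using ((hasDerivAt_id (0 : ℝ)).smul_const d).const_add x
  exact (by simpa using hd : HasFDerivAt h h' (x + (0 : ℝ) • d)).comp_hasDerivAt 0 hline

theorem eventually_nhdsGT_forall_apply_add_smul_nonpos {ι : Type*} [Finite ι] {c : ι → E → ℝ}
    {c' : ι → StrongDual ℝ E} {x d : E} (hc : ∀ i, HasFDerivAt (c i) (c' i) x)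
    (hx : ∀ i, c i x ≤ 0) (hd : ∀ i, c i x = 0 → c' i d < 0) :
    ∀ᶠ t in 𝓝[>] (0 : ℝ), ∀ i, c i (x + t • d) ≤ 0 := by
  rw [eventually_all]
  intro i
  have hline := (hc i).hasDerivAt_add_smul d
  rcases (hx i).eq_or_lt with hact | hinact
  · filter_upwards [hline.eventually_nhdsGT_lt (hd i hact)] with t ht
    simpa [hact] using ht.le
  · have := hline.continuousAt.tendsto.mono_left (nhdsWithin_le_nhds (s := Ioi 0))
    simp only [zero_smul, add_zero] at this
    filter_upwards [this.eventually_lt_const hinact] with t ht using ht.le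

theorem IsLocalMinOn.exists_kkt_multipliers_of_hasFDerivAt {ι : Type*} [Fintype ι]
    {f : E → ℝ} {c : ι → E → ℝ} {f' : StrongDual ℝ E} {c' : ι → StrongDual ℝ E} {x : E}
    (hmin : IsLocalMinOn f {y | ∀ i, c i y ≤ 0} x) (hx : ∀ i, c i x ≤ 0)
    (hf : HasFDerivAt f f' x) (hc : ∀ i, HasFDerivAt (c i) (c' i) x)
    (hMF : ∃ d, ∀ i, c i x = 0 → c' i d < 0) :
    ∃ μ : ι → ℝ, (∀ i, 0 ≤ μ i) ∧ (∀ i, μ i * c i x = 0) ∧ f' + ∑ i, μ i • c' i = 0 := by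
  classical
  have hFJ : ∀ d, ∃ o ∈ {o : Option ι | ∀ i, o = some i → c i x = 0},
      0 ≤ Option.elim o f' c' d := by
    intro d
    by_contra! hdesc
    have hmem : d ∈ posTangentConeAt {y | ∀ i, c i y ≤ 0} x :=
      mem_posTangentConeAt_of_frequently_mem <| Eventually.frequently <|
        eventually_nhdsGT_forall_apply_add_smul_nonpos hc hx fun i hi => hdesc (some i) (by simpa)
    have := hmin.hasFDerivWithinAt_nonneg hf.hasFDerivWithinAt hmem
    exact (hdesc none (by simp)).not_ge this
  obtain ⟨ν, hν_nonneg, hν_inactive, hν_ne, hν_sum⟩ :=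
    exists_nonneg_sum_smul_eq_zero_of_forall_exists_nonneg _ _ hFJ
  simp only [Fintype.sum_option, Option.elim] at hν_sum
  have hν_some : ∀ i, c i x ≠ 0 → ν (some i) = 0 := fun i hi =>
    hν_inactive (some i) (by simpa using hi)
  obtain ⟨d, hd⟩ := hMF
  have hν_none : 0 < ν none := by
    refine (hν_nonneg none).lt_of_ne' fun h0 => hν_ne ?_
    rw [h0, zero_smul, zero_add] at hν_sum
    -- at the MFCQ direction every term is nonpositive, yet they sum to zero
    have hterm : ∀ i, ν (some i) * c' i d ≤ 0 := fun i => by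
      by_cases hi : c i x = 0
      · exact mul_nonpos_of_nonneg_of_nonpos (hν_nonneg _) (hd i hi).le
      · simp [hν_some i hi]
    have hsum : ∑ i, ν (some i) * c' i d = 0 := by simpa using congrArg (· d) hν_sum
    have hterm0 := (Finset.sum_eq_zero_iff_of_nonpos fun i _ => hterm i).1 hsum
    funext o
    rcases o with _ | i
    · exact h0
    · by_cases hi : c i x = 0
      · exact (mul_eq_zero.1 (hterm0 i (Finset.mem_univ _))).resolve_right (hd i hi).ne
      · exact hν_some i hi
  refine ⟨fun i => ν (some i) / ν none, fun i => div_nonneg (hν_nonneg _) hν_none.le,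
    fun i => ?_, ?_⟩
  · by_cases hi : c i x = 0
    · simp [hi]
    · simp [hν_some i hi]
  · calc f' + ∑ i, (ν (some i) / ν none) • c' i
        = (ν none)⁻¹ • (ν none • f' + ∑ i, ν (some i) • c' i) := by
          simp_rw [smul_add, Finset.smul_sum, smul_smul, div_eq_inv_mul,
            inv_mul_cancel₀ hν_none.ne', one_smul]
      _ = 0 := by rw [hν_sum, smul_zero]

theorem IsLocalMinOn.exists_kkt_multipliers₂_of_hasFDerivAt {ι κ : Type*} [Fintype ι] [Fintype κ]
    {f : E → ℝ} {c : ι → E → ℝ} {d : κ → E → ℝ} {f' : StrongDual ℝ E} {c' : ι → StrongDual ℝ E}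
    {d' : κ → StrongDual ℝ E} {x : E}
    (hmin : IsLocalMinOn f {y | (∀ i, c i y ≤ 0) ∧ ∀ j, d j y ≤ 0} x)
    (hcx : ∀ i, c i x ≤ 0) (hdx : ∀ j, d j x ≤ 0) (hf : HasFDerivAt f f' x)
    (hc : ∀ i, HasFDerivAt (c i) (c' i) x) (hd : ∀ j, HasFDerivAt (d j) (d' j) x)
    (hMF : ∃ v, (∀ i, c i x = 0 → c' i v < 0) ∧ ∀ j, d j x = 0 → d' j v < 0) :
    ∃ (μ : ι → ℝ) (ν : κ → ℝ), ((∀ i, 0 ≤ μ i) ∧ ∀ i, μ i * c i x = 0) ∧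
      ((∀ j, 0 ≤ ν j) ∧ ∀ j, ν j * d j x = 0) ∧
      f' + ∑ i, μ i • c' i + ∑ j, ν j • d' j = 0 := by
  obtain ⟨v, hvc, hvd⟩ := hMF
  obtain ⟨μ, hμ, hμx, hμD⟩ :=
    IsLocalMinOn.exists_kkt_multipliers_of_hasFDerivAt (c := Sum.elim c d) (c' := Sum.elim c' d')
      (by simpa only [Sum.forall, Sum.elim_inl, Sum.elim_inr] using hmin)
      (Sum.forall.2 ⟨hcx, hdx⟩) hf (Sum.forall.2 ⟨hc, hd⟩) ⟨v, Sum.forall.2 ⟨hvc, hvd⟩⟩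
  refine ⟨μ ∘ Sum.inl, μ ∘ Sum.inr, ⟨fun i => hμ _, fun i => hμx _⟩,
    ⟨fun j => hμ _, fun j => hμx _⟩, ?_⟩
  simpa only [Fintype.sum_sum_type, Sum.elim_inl, Sum.elim_inr, Function.comp_apply, add_assoc]
    using hμD

theorem ConvexOn.add_le_of_hasFDerivAt {h : E → ℝ} {h' : StrongDual ℝ E} {x : E}
    (hc : ConvexOn ℝ univ h) (hd : HasFDerivAt h h' x) (y : E) : h x + h' (y - x) ≤ h y := by
  have hline : ConvexOn ℝ univ (h ∘ AffineMap.lineMap (k := ℝ) x y) := by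
    simpa using hc.comp_affineMap (AffineMap.lineMap (k := ℝ) x y)
  have hderiv : HasDerivAt (h ∘ AffineMap.lineMap (k := ℝ) x y) (h' (y - x)) 0 :=
    (by simpa using hd : HasFDerivAt h h' (AffineMap.lineMap x y (0 : ℝ))).comp_hasDerivAt 0
      AffineMap.hasDerivAt_lineMap
  have := hline.le_slope_of_hasDerivAt (mem_univ 0) (mem_univ 1) zero_lt_one hderiv
  simp only [slope_def_field, Function.comp_apply, AffineMap.lineMap_apply_zero,
    AffineMap.lineMap_apply_one, sub_zero, div_one] at this
  linarith

theorem ConvexOn.fun_sum {ι : Type*} {s : Set E} {t : Finset ι} {g : ι → E → ℝ}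
    (hs : Convex ℝ s) (hg : ∀ i ∈ t, ConvexOn ℝ s (g i)) :
    ConvexOn ℝ s fun x => ∑ i ∈ t, g i x := by
  simpa only [← Finset.sum_apply] using
    Finset.sum_induction g (ConvexOn ℝ s) (fun _ _ => ConvexOn.add) (convexOn_const 0 hs) hg

end Calculus

section Bilevel

variable {E F : Type*} [NormedAddCommGroup E] [NormedSpace ℝ E]
  [NormedAddCommGroup F] [NormedSpace ℝ F]

theorem DifferentiableAt.fderiv_apply_prod_eq_add {h : E × F → ℝ} {x₀ : E} {y₀ : F}
    (hd : DifferentiableAt ℝ h (x₀, y₀)) (dx : E) (dy : F) :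
    fderiv ℝ h (x₀, y₀) (dx, dy) =
      fderiv ℝ (fun x => h (x, y₀)) x₀ dx + fderiv ℝ (fun y => h (x₀, y)) y₀ dy := by
  have hx : HasFDerivAt (fun x => h (x, y₀))
      ((fderiv ℝ h (x₀, y₀)).comp (ContinuousLinearMap.inl ℝ E F)) x₀ :=
    hd.hasFDerivAt.comp x₀ (hasFDerivAt_prodMk_left x₀ y₀)
  have hy : HasFDerivAt (fun y => h (x₀, y))
      ((fderiv ℝ h (x₀, y₀)).comp (ContinuousLinearMap.inr ℝ E F)) y₀ :=
    hd.hasFDerivAt.comp y₀ (hasFDerivAt_prodMk_right x₀ y₀)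
  simp [hx.fderiv, hy.fderiv, ← map_add]

/-- At a lower-level KKT point `y₀` of `min_y {f x₀ y | g x₀ y ≤ 0}`, jointly convex data make the
`x`-gradient of the Lagrangian a subgradient of the lower-level value function at `x₀`. -/
theorem add_le_of_convexOn_of_kkt {ι : Type*} [Fintype ι] {f : E → F → ℝ} {g : E → F → ι → ℝ}
    {x₀ : E} {y₀ : F} {w : ι → ℝ}
    (hf : ConvexOn ℝ univ fun p : E × F => f p.1 p.2)
    (hg : ∀ i, ConvexOn ℝ univ fun p : E × F => g p.1 p.2 i)
    (hfd : DifferentiableAt ℝ (fun p : E × F => f p.1 p.2) (x₀, y₀))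
    (hgd : ∀ i, DifferentiableAt ℝ (fun p : E × F => g p.1 p.2 i) (x₀, y₀))
    (hw : ∀ i, 0 ≤ w i) (hwg : ∀ i, w i * g x₀ y₀ i = 0)
    (hstat : fderiv ℝ (fun y => f x₀ y) y₀ + ∑ i, w i • fderiv ℝ (fun y => g x₀ y i) y₀ = 0)
    {x : E} {y : F} (hxy : ∀ i, g x y i ≤ 0) :
    f x₀ y₀ + (fderiv ℝ (fun x => f x y₀) x₀ + ∑ i, w i • fderiv ℝ (fun x => g x y₀ i) x₀)
      (x - x₀) ≤ f x y := by
  set L : E × F → ℝ := fun p => f p.1 p.2 + ∑ i, w i * g p.1 p.2 i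
  have hLconv : ConvexOn ℝ univ L :=
    hf.add (ConvexOn.fun_sum convex_univ fun i _ => by simpa using (hg i).smul (hw i))
  have hLd : HasFDerivAt L (fderiv ℝ (fun p : E × F => f p.1 p.2) (x₀, y₀) +
      ∑ i, w i • fderiv ℝ (fun p : E × F => g p.1 p.2 i) (x₀, y₀)) (x₀, y₀) :=
    hfd.hasFDerivAt.add (HasFDerivAt.fun_sum fun i _ => (hgd i).hasFDerivAt.const_mul (w i))
  have htangent := hLconv.add_le_of_hasFDerivAt hLd (x, y)
  have hstat_y := congrArg (· (y - y₀)) hstat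
  simp only [Prod.mk_sub_mk, add_apply, sum_apply, smul_apply, zero_apply, smul_eq_mul,
    hfd.fderiv_apply_prod_eq_add, (hgd _).fderiv_apply_prod_eq_add, mul_add,
    Finset.sum_add_distrib, L, hwg, Finset.sum_const_zero, add_zero] at htangent hstat_y ⊢
  have hLy : ∑ i, w i * g x y i ≤ 0 :=
    Finset.sum_nonpos fun i _ => mul_nonpos_of_nonneg_of_nonpos (hw i) (hxy i)
  linarith

end Bilevel

theorem le_add_mul_sub_of_coe_le_of_le_coe {A B lam a b : ℝ} {r : EReal} (hlam : 0 ≤ lam)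
    (har : (a : EReal) ≤ r) (hrb : r ≤ b) (h : (A : EReal) ≤ B + lam * (b - r)) :
    A ≤ B + lam * (b - a) := by
  lift r to ℝ using ⟨ne_top_of_le_ne_top (EReal.coe_ne_top b) hrb,
    ne_bot_of_le_ne_bot (EReal.coe_ne_bot a) har⟩
  norm_cast at h har hrb
  nlinarith

section ValueFunction

variable {n m q : ℕ} {f : Vec n → Vec m → ℝ} {g : Vec n → Vec m → Vec q} {x : Vec n}

theorem phi_le_coe {y : Vec m} (hy : ∀ k, g x y k ≤ 0) : phi f g x ≤ f x y :=
  iInf₂_le y hy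

theorem coe_le_phi {a : ℝ} (h : ∀ y, (∀ k, g x y k ≤ 0) → a ≤ f x y) : (a : EReal) ≤ phi f g x :=
  le_iInf₂ fun y hy => EReal.coe_le_coe_iff.2 (h y hy)

theorem isMinOn_of_coe_le_phi {y : Vec m} (h : (f x y : EReal) ≤ phi f g x) :
    IsMinOn (f x) {y | ∀ k, g x y k ≤ 0} y :=
  fun _ hy' => EReal.coe_le_coe_iff.1 (h.trans (phi_le_coe hy'))

theorem isLocalMinOn_of_partialCalm {p : ℕ} {F : Vec n → Vec m → ℝ} {G : Vec n → Vec m → Vec p}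
    {xb : Vec n} {yb : Vec m} {c : StrongDual ℝ (Vec n)} {lam ε : ℝ} (hlam : 0 ≤ lam)
    (hphi : phi f g xb = f xb yb)
    (hminor : ∀ x y, (∀ k, g x y k ≤ 0) → f xb yb + c (x - xb) ≤ f x y)
    (hε : 0 < ε)
    (hcalm : ∀ (x : Vec n) (y : Vec m), dist (x, y) (xb, yb) < ε →
      (∀ j, G x y j ≤ 0) → (∀ k, g x y k ≤ 0) →
      (F xb yb : EReal) + (lam : ℝ) * ((f xb yb : EReal) - phi f g xb) ≤
        (F x y : EReal) + (lam : ℝ) * ((f x y : EReal) - phi f g x)) :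
    IsLocalMinOn (fun pq : Vec n × Vec m => F pq.1 pq.2 + lam * f pq.1 pq.2 - lam * c (pq.1 - xb))
      {pq | (∀ j, G pq.1 pq.2 j ≤ 0) ∧ ∀ k, g pq.1 pq.2 k ≤ 0} (xb, yb) := by
  filter_upwards [self_mem_nhdsWithin, mem_nhdsWithin_of_mem_nhds (Metric.ball_mem_nhds _ hε)]
    with ⟨x, y⟩ ⟨hG, hg⟩ hball
  have hcal := hcalm x y hball hG hg
  rw [hphi, ← EReal.coe_sub, sub_self, EReal.coe_zero, mul_zero, add_zero] at hcal
  have := le_add_mul_sub_of_coe_le_of_le_coe hlam (coe_le_phi (hminor x)) (phi_le_coe hg) hcal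
  simp only [sub_self, map_zero, mul_zero, sub_zero]
  linarith

end ValueFunction

theorem stmt_12_general
    {n m p q : ℕ}
    (F : Vec n → Vec m → ℝ) (G : Vec n → Vec m → Vec p)
    (f : Vec n → Vec m → ℝ) (g : Vec n → Vec m → Vec q)
    (hF : ContDiff ℝ 1 (fun pq : Vec n × Vec m => F pq.1 pq.2))
    (hG : ContDiff ℝ 1 (fun pq : Vec n × Vec m => G pq.1 pq.2))
    (hf : ContDiff ℝ 1 (fun pq : Vec n × Vec m => f pq.1 pq.2))
    (hg : ContDiff ℝ 1 (fun pq : Vec n × Vec m => g pq.1 pq.2))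
    -- f and each gᵢ are fully convex
    (hfconv : ConvexOn ℝ Set.univ (fun pq : Vec n × Vec m => f pq.1 pq.2))
    (hgconv : ∀ i, ConvexOn ℝ Set.univ (fun pq : Vec n × Vec m => g pq.1 pq.2 i))
    (xb : Vec n) (yb : Vec m)
    -- (xb, yb) is feasible for (LLVFR)
    (hfeas : (∀ j, G xb yb j ≤ 0) ∧ (∀ k, g xb yb k ≤ 0) ∧
      (f xb yb : EReal) ≤ phi f g xb)
    -- (LLVFR) is partially calm on (x,y) ↦ f(x,y) − φ(x) at (xb, yb)
    (hcalm : ∃ lam0 > (0 : ℝ), ∃ ε > (0 : ℝ), ∀ (x : Vec n) (y : Vec m),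
      dist (x, y) (xb, yb) < ε →
      (∀ j, G x y j ≤ 0) → (∀ k, g x y k ≤ 0) →
      (F xb yb : EReal) + (lam0 : ℝ) * ((f xb yb : EReal) - phi f g xb) ≤
        (F x y : EReal) + (lam0 : ℝ) * ((f x y : EReal) - phi f g x))
    -- LMFCQ at (xb, yb)
    (hLMFCQ : ∃ d : Vec m, ∀ k, g xb yb k = 0 →
      fderiv ℝ (fun y => g xb y k) yb d < 0)
    -- LLVF-MFCQ at (xb, yb)
    (hMFCQ : ∃ d : Vec n × Vec m,
      (∀ j, G xb yb j = 0 →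
        fderiv ℝ (fun pq : Vec n × Vec m => G pq.1 pq.2 j) (xb, yb) d < 0) ∧
      (∀ k, g xb yb k = 0 →
        fderiv ℝ (fun pq : Vec n × Vec m => g pq.1 pq.2 k) (xb, yb) d < 0)) :
    ∃ lam > (0 : ℝ), ∃ (u : Vec p) (v w : Vec q) (z : Vec m),
      -- (a)
      (fderiv ℝ (fun pq : Vec n × Vec m => F pq.1 pq.2) (xb, yb)
        + ∑ j, u j • fderiv ℝ (fun pq : Vec n × Vec m => G pq.1 pq.2 j) (xb, yb)
        + ∑ k, v k • fderiv ℝ (fun pq : Vec n × Vec m => g pq.1 pq.2 k) (xb, yb)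
        + lam • fderiv ℝ (fun pq : Vec n × Vec m => f pq.1 pq.2) (xb, yb)
        - lam • ((fderiv ℝ (fun x => f x z) xb
            + ∑ k, w k • fderiv ℝ (fun x => g x z k) xb).comp
              (ContinuousLinearMap.fst ℝ (Vec n) (Vec m)))
        = 0) ∧
      -- (b)
      (fderiv ℝ (f xb) z + ∑ k, w k • fderiv ℝ (fun y => g xb y k) z = 0) ∧
      -- (c)
      ((∀ j, 0 ≤ u j) ∧ (∀ j, G xb yb j ≤ 0) ∧ ∑ j, u j * G xb yb j = 0) ∧
      -- (d)
      ((∀ k, 0 ≤ v k) ∧ (∀ k, g xb yb k ≤ 0) ∧ ∑ k, v k * g xb yb k = 0) ∧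
      -- (e)
      ((∀ k, 0 ≤ w k) ∧ (∀ k, g xb z k ≤ 0) ∧ ∑ k, w k * g xb z k = 0) := by
  obtain ⟨hGfeas, hgfeas, hphi⟩ := hfeas
  obtain ⟨lam, hlam, ε, hε, hcalm⟩ := hcalm
  have hfd : Differentiable ℝ fun pq : Vec n × Vec m => f pq.1 pq.2 := hf.differentiable one_ne_zero
  have hgd (k) : Differentiable ℝ fun pq : Vec n × Vec m => g pq.1 pq.2 k :=
    (contDiff_pi.1 hg k).differentiable one_ne_zero
  obtain ⟨w, hw, hwg, hwD⟩ :=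
    (isMinOn_of_coe_le_phi hphi).localize.exists_kkt_multipliers_of_hasFDerivAt hgfeas
      ((hf.comp (contDiff_prodMk_right xb)).differentiable one_ne_zero yb).hasFDerivAt
      (fun k => (((contDiff_pi.1 hg k).comp (contDiff_prodMk_right xb)).differentiable
        one_ne_zero yb).hasFDerivAt) hLMFCQ
  set c := fderiv ℝ (fun x => f x yb) xb + ∑ k, w k • fderiv ℝ (fun x => g x yb k) xb
  have hminor (x y) (hxy : ∀ k, g x y k ≤ 0) : f xb yb + c (x - xb) ≤ f x y :=
    add_le_of_convexOn_of_kkt hfconv hgconv (hfd _) (fun k => hgd k _) hw hwg hwD hxy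
  have hpenalty := isLocalMinOn_of_partialCalm hlam.le
    (le_antisymm (phi_le_coe hgfeas) hphi) hminor hε hcalm
  obtain ⟨u, v, ⟨hu, huG⟩, ⟨hv, hvg⟩, huvD⟩ :=
    hpenalty.exists_kkt_multipliers₂_of_hasFDerivAt hGfeas hgfeas
      ((((hF.differentiable one_ne_zero) _).hasFDerivAt.add ((hfd _).hasFDerivAt.const_mul lam)).sub
        ((c.hasFDerivAt.comp _ (hasFDerivAt_fst.sub_const xb)).const_mul lam))
      (fun j => ((contDiff_pi.1 hG j).differentiable one_ne_zero _).hasFDerivAt)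
      (fun k => (hgd k _).hasFDerivAt) hMFCQ
  refine ⟨lam, hlam, u, v, w, yb, ?_, hwD, ⟨hu, hGfeas, Finset.sum_eq_zero fun j _ => huG j⟩,
    ⟨hv, hgfeas, Finset.sum_eq_zero fun k _ => hvg k⟩,
    ⟨hw, hgfeas, Finset.sum_eq_zero fun k _ => hwg k⟩⟩
  rw [← huvD]
  abel

/-- Necessary optimality conditions for the value function
reformulation (LLVFR) under full convexity, partial calmness, the LMFCQ and the
LLVF-MFCQ. -/
theorem stmt_12
    {n m p q : ℕ} (hn : 0 < n) (hm : 0 < m) (hp : 0 < p) (hq : 0 < q)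
    (F : Vec n → Vec m → ℝ) (G : Vec n → Vec m → Vec p)
    (f : Vec n → Vec m → ℝ) (g : Vec n → Vec m → Vec q)
    (hF : ContDiff ℝ 1 (fun pq : Vec n × Vec m => F pq.1 pq.2))
    (hG : ContDiff ℝ 1 (fun pq : Vec n × Vec m => G pq.1 pq.2))
    (hf : ContDiff ℝ 1 (fun pq : Vec n × Vec m => f pq.1 pq.2))
    (hg : ContDiff ℝ 1 (fun pq : Vec n × Vec m => g pq.1 pq.2))
    -- f and each gᵢ are fully convex
    (hfconv : ConvexOn ℝ Set.univ (fun pq : Vec n × Vec m => f pq.1 pq.2))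
    (hgconv : ∀ i, ConvexOn ℝ Set.univ (fun pq : Vec n × Vec m => g pq.1 pq.2 i))
    (xb : Vec n) (yb : Vec m)
    -- (xb, yb) is feasible for (LLVFR)
    (hfeas : (∀ j, G xb yb j ≤ 0) ∧ (∀ k, g xb yb k ≤ 0) ∧
      (f xb yb : EReal) ≤ phi f g xb)
    -- (xb, yb) is a local optimal solution of (LLVFR)
    (hloc : ∃ ε > (0 : ℝ), ∀ (x : Vec n) (y : Vec m), dist (x, y) (xb, yb) < ε →
      (∀ j, G x y j ≤ 0) → (∀ k, g x y k ≤ 0) → ((f x y : EReal) ≤ phi f g x) →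
      F xb yb ≤ F x y)
    -- (LLVFR) is partially calm on (x,y) ↦ f(x,y) − φ(x) at (xb, yb)
    (hcalm : ∃ lam0 > (0 : ℝ), ∃ ε > (0 : ℝ), ∀ (x : Vec n) (y : Vec m),
      dist (x, y) (xb, yb) < ε →
      (∀ j, G x y j ≤ 0) → (∀ k, g x y k ≤ 0) →
      (F xb yb : EReal) + (lam0 : ℝ) * ((f xb yb : EReal) - phi f g xb) ≤
        (F x y : EReal) + (lam0 : ℝ) * ((f x y : EReal) - phi f g x))
    -- LMFCQ at (xb, yb)
    (hLMFCQ : ∃ d : Vec m, ∀ k, g xb yb k = 0 →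
      fderiv ℝ (fun y => g xb y k) yb d < 0)
    -- LLVF-MFCQ at (xb, yb)
    (hMFCQ : ∃ d : Vec n × Vec m,
      (∀ j, G xb yb j = 0 →
        fderiv ℝ (fun pq : Vec n × Vec m => G pq.1 pq.2 j) (xb, yb) d < 0) ∧
      (∀ k, g xb yb k = 0 →
        fderiv ℝ (fun pq : Vec n × Vec m => g pq.1 pq.2 k) (xb, yb) d < 0)) :
    ∃ lam > (0 : ℝ), ∃ (u : Vec p) (v w : Vec q) (z : Vec m),
      -- (a)
      (fderiv ℝ (fun pq : Vec n × Vec m => F pq.1 pq.2) (xb, yb)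
        + ∑ j, u j • fderiv ℝ (fun pq : Vec n × Vec m => G pq.1 pq.2 j) (xb, yb)
        + ∑ k, v k • fderiv ℝ (fun pq : Vec n × Vec m => g pq.1 pq.2 k) (xb, yb)
        + lam • fderiv ℝ (fun pq : Vec n × Vec m => f pq.1 pq.2) (xb, yb)
        - lam • ((fderiv ℝ (fun x => f x z) xb
            + ∑ k, w k • fderiv ℝ (fun x => g x z k) xb).comp
              (ContinuousLinearMap.fst ℝ (Vec n) (Vec m)))
        = 0) ∧
      -- (b)
      (fderiv ℝ (f xb) z + ∑ k, w k • fderiv ℝ (fun y => g xb y k) z = 0) ∧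
      -- (c)
      ((∀ j, 0 ≤ u j) ∧ (∀ j, G xb yb j ≤ 0) ∧ ∑ j, u j * G xb yb j = 0) ∧
      -- (d)
      ((∀ k, 0 ≤ v k) ∧ (∀ k, g xb yb k ≤ 0) ∧ ∑ k, v k * g xb yb k = 0) ∧
      -- (e)
      ((∀ k, 0 ≤ w k) ∧ (∀ k, g xb z k ≤ 0) ∧ ∑ k, w k * g xb z k = 0) :=
  stmt_12_general F G f g hF hG hf hg hfconv hgconv xb yb hfeas hcalm hLMFCQ hMFCQ
end

section
/- Let F and G be continuously differentiable and f and g be twice continuously differentiable. Suppose λ > 0 and (x,y,z,s,u,v,w) ∈ ℝⁿ×ℝᵐ×ℝ^q×ℝᵐ×ℝᵖ×ℝ^q×ℝ^q satisfy: ∇F(x,y) + ∇G(x,y)ᵀu + ∇g(x,y)ᵀ(v − λz) + [∇_{(x,y)}(∇_yℓ)(x,y,z)]ᵀs = 0; ∇_y f(x,y) + ∇_y g(x,y)ᵀz = 0; −λg(x,y) + ∇_y g(x,y)s + w = 0; u ≥ 0, G(x,y) ≤ 0, uᵀG(x,y) = 0; v ≥ 0, g(x,y) ≤ 0, vᵀg(x,y)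 = 0; w ≤ 0, z ≥ 0, wᵀz = 0; together with zᵀg(x,y) = 0 and ∇_{(x,y)}(∇_yℓ)(x,y,z) = 0. Then the LLVF stationarity conditions hold at (x,y) with lower-level point equal to y and multiplier z, for the same λ; that is: ∇F(x,y) + ∇G(x,y)ᵀu + ∇g(x,y)ᵀv + λ∇f(x,y) − λ(∇_x f(x,y) + ∇_x g(x,y)ᵀz, 0) = 0; ∇_y f(x,y) + ∇_y g(x,y)ᵀz = 0; u ≥ 0, G(x,y) ≤ 0, uᵀG(x,y) = 0; v ≥ 0, g(x,y) ≤ 0, vᵀg(x,y) = 0; z ≥ 0, g(x,y) ≤ 0, zᵀg(x,y) = 0. -/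
/-- The `i`-th component of `∇_y ℓ(x, y, z)` where `ℓ(x,y,z) = f(x,y) + zᵀg(x,y)` is the
lower-level Lagrangian, as a function of the triple `w = (x, y, z)`. -/
noncomputable def gradyL {n m q : ℕ} (f : Vec n → Vec m → ℝ) (g : Vec n → Vec m → Vec q)
    (i : Fin m) (w : Vec n × Vec m × Vec q) : ℝ :=
  fderiv ℝ (fun y => f w.1 y + ∑ k, w.2.2 k * g w.1 y k) w.2.1 (Pi.single i 1)

/-- Partial derivative in the first variable as composition with `inl`. -/
lemma partial_fst {n m : ℕ} (h : Vec n × Vec m → ℝ) (x : Vec n) (y : Vec m)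
    (hd : DifferentiableAt ℝ h (x, y)) :
    fderiv ℝ (fun x' => h (x', y)) x
      = (fderiv ℝ h (x, y)).comp (ContinuousLinearMap.inl ℝ (Vec n) (Vec m)) := by
  exact (hd.hasFDerivAt.comp x (hasFDerivAt_prodMk_left x y)).fderiv

/-- Partial derivative in the second variable as composition with `inr`. -/
lemma partial_snd {n m : ℕ} (h : Vec n × Vec m → ℝ) (x : Vec n) (y : Vec m)
    (hd : DifferentiableAt ℝ h (x, y)) :
    fderiv ℝ (fun y' => h (x, y')) y
      = (fderiv ℝ h (x, y)).comp (ContinuousLinearMap.inr ℝ (Vec n) (Vec m)) := by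
  exact (hd.hasFDerivAt.comp y (hasFDerivAt_prodMk_right x y)).fderiv

/-- A stationary point of the KKT reformulation with
`zᵀg(x,y) = 0` and `∇_{(x,y)}(∇_yℓ)(x,y,z) = 0` yields LLVF stationarity at `(x,y)`
with lower-level point `y` and multiplier `z`, for the same `λ`. -/

theorem stmt_13
    {n m p q : ℕ} (hn : 0 < n) (hm : 0 < m) (hp : 0 < p) (hq : 0 < q)
    (F : Vec n → Vec m → ℝ) (G : Vec n → Vec m → Vec p)
    (f : Vec n → Vec m → ℝ) (g : Vec n → Vec m → Vec q)
    (hF : ContDiff ℝ 1 (fun pq : Vec n × Vec m => F pq.1 pq.2))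
    (hG : ContDiff ℝ 1 (fun pq : Vec n × Vec m => G pq.1 pq.2))
    (hf : ContDiff ℝ 2 (fun pq : Vec n × Vec m => f pq.1 pq.2))
    (hg : ContDiff ℝ 2 (fun pq : Vec n × Vec m => g pq.1 pq.2))
    (lam : ℝ) (hlam : 0 < lam)
    (x : Vec n) (y : Vec m) (z : Vec q) (s : Vec m) (u : Vec p) (v w : Vec q)
    -- (L-x)
    (h1 : fderiv ℝ (fun pq : Vec n × Vec m => F pq.1 pq.2) (x, y)
        + ∑ j, u j • fderiv ℝ (fun pq : Vec n × Vec m => G pq.1 pq.2 j) (x, y)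
        + ∑ k, (v k - lam * z k) •
            fderiv ℝ (fun pq : Vec n × Vec m => g pq.1 pq.2 k) (x, y)
        + ∑ i, s i •
            fderiv ℝ (fun pq : Vec n × Vec m => gradyL f g i (pq.1, pq.2, z)) (x, y)
        = 0)
    -- (L-eq)
    (h2 : fderiv ℝ (f x) y + ∑ k, z k • fderiv ℝ (fun y' => g x y' k) y = 0)
    -- (L-z)
    (h3 : ∀ k, -lam * g x y k + fderiv ℝ (fun y' => g x y' k) y s + w k = 0)
    -- (CP-u), (CP-v), (CP-w)
    (h4 : (∀ j, 0 ≤ u j) ∧ (∀ j, G x y j ≤ 0) ∧ ∑ j, u j * G x y j = 0)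
    (h5 : (∀ k, 0 ≤ v k) ∧ (∀ k, g x y k ≤ 0) ∧ ∑ k, v k * g x y k = 0)
    (h6 : (∀ k, w k ≤ 0) ∧ (∀ k, 0 ≤ z k) ∧ ∑ k, w k * z k = 0)
    -- zᵀ g(x, y) = 0
    (h7 : ∑ k, z k * g x y k = 0)
    -- ∇_{(x,y)}(∇_y ℓ)(x, y, z) = 0
    (h8 : ∀ i : Fin m,
      fderiv ℝ (fun pq : Vec n × Vec m => gradyL f g i (pq.1, pq.2, z)) (x, y) = 0) :
    -- LLVF stationarity at (x, y) with lower-level point y and multiplier z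
    (fderiv ℝ (fun pq : Vec n × Vec m => F pq.1 pq.2) (x, y)
        + ∑ j, u j • fderiv ℝ (fun pq : Vec n × Vec m => G pq.1 pq.2 j) (x, y)
        + ∑ k, v k • fderiv ℝ (fun pq : Vec n × Vec m => g pq.1 pq.2 k) (x, y)
        + lam • fderiv ℝ (fun pq : Vec n × Vec m => f pq.1 pq.2) (x, y)
        - lam • ((fderiv ℝ (fun x' => f x' y) x
            + ∑ k, z k • fderiv ℝ (fun x' => g x' y k) x).comp
              (ContinuousLinearMap.fst ℝ (Vec n) (Vec m)))
        = 0) ∧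
    (fderiv ℝ (f x) y + ∑ k, z k • fderiv ℝ (fun y' => g x y' k) y = 0) ∧
    ((∀ j, 0 ≤ u j) ∧ (∀ j, G x y j ≤ 0) ∧ ∑ j, u j * G x y j = 0) ∧
    ((∀ k, 0 ≤ v k) ∧ (∀ k, g x y k ≤ 0) ∧ ∑ k, v k * g x y k = 0) ∧
    ((∀ k, 0 ≤ z k) ∧ (∀ k, g x y k ≤ 0) ∧ ∑ k, z k * g x y k = 0) := by
  obtain ⟨h4a, h4b, h4c⟩ := h4
  obtain ⟨h5a, h5b, h5c⟩ := h5
  obtain ⟨h6a, h6b, h6c⟩ := h6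
  refine ⟨?_, h2, ⟨h4a, h4b, h4c⟩, ⟨h5a, h5b, h5c⟩, ⟨h6b, h5b, h7⟩⟩
  -- differentiability
  have hfd : DifferentiableAt ℝ (fun pq : Vec n × Vec m => f pq.1 pq.2) (x, y) :=
    (hf.differentiable (by norm_num)).differentiableAt
  have hgfull : DifferentiableAt ℝ (fun pq : Vec n × Vec m => g pq.1 pq.2) (x, y) :=
    (hg.differentiable (by norm_num)).differentiableAt
  have hgd : ∀ k, DifferentiableAt ℝ (fun pq : Vec n × Vec m => g pq.1 pq.2 k) (x, y) := by
    intro k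
    exact ((ContinuousLinearMap.proj k : Vec q →L[ℝ] ℝ).differentiableAt).comp (x, y) hgfull
  -- notations
  set Ff := fderiv ℝ (fun pq : Vec n × Vec m => f pq.1 pq.2) (x, y) with hFf
  -- partial derivative rewrites
  have hfx : fderiv ℝ (fun x' => f x' y) x
      = Ff.comp (ContinuousLinearMap.inl ℝ (Vec n) (Vec m)) :=
    partial_fst (fun pq : Vec n × Vec m => f pq.1 pq.2) x y hfd
  have hgx : ∀ k, fderiv ℝ (fun x' => g x' y k) x
      = (fderiv ℝ (fun pq : Vec n × Vec m => g pq.1 pq.2 k) (x, y)).comp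
          (ContinuousLinearMap.inl ℝ (Vec n) (Vec m)) := fun k =>
    partial_fst (fun pq : Vec n × Vec m => g pq.1 pq.2 k) x y (hgd k)
  have hfy : fderiv ℝ (f x) y
      = Ff.comp (ContinuousLinearMap.inr ℝ (Vec n) (Vec m)) :=
    partial_snd (fun pq : Vec n × Vec m => f pq.1 pq.2) x y hfd
  have hgy : ∀ k, fderiv ℝ (fun y' => g x y' k) y
      = (fderiv ℝ (fun pq : Vec n × Vec m => g pq.1 pq.2 k) (x, y)).comp
          (ContinuousLinearMap.inr ℝ (Vec n) (Vec m)) := fun k =>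
    partial_snd (fun pq : Vec n × Vec m => g pq.1 pq.2 k) x y (hgd k)
  -- clean h1 using h8
  simp only [h8, smul_zero, Finset.sum_const_zero, add_zero] at h1
  rw [hfx]
  simp only [hgx]
  rw [hfy] at h2
  simp only [hgy] at h2
  refine ContinuousLinearMap.ext fun c => ?_
  have hAc := congrArg (fun L : Vec n × Vec m →L[ℝ] ℝ => L c) h1
  have h2c := congrArg (fun L : Vec m →L[ℝ] ℝ => L c.2) h2
  simp only [ContinuousLinearMap.add_apply, ContinuousLinearMap.coe_sum',
    Finset.sum_apply, ContinuousLinearMap.coe_smul', Pi.smul_apply, smul_eq_mul,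
    ContinuousLinearMap.zero_apply, ContinuousLinearMap.comp_apply,
    ContinuousLinearMap.inl_apply, ContinuousLinearMap.inr_apply,
    ContinuousLinearMap.coe_fst', ContinuousLinearMap.sub_apply] at hAc h2c ⊢
  -- decompositions
  have hdec : ∀ L : Vec n × Vec m →L[ℝ] ℝ, L c = L (c.1, 0) + L (0, c.2) := by
    intro L
    rw [← map_add]
    congr 1
    simp [Prod.ext_iff]
  have df := hdec Ff
  have e2 : ∑ k, z k * (fderiv ℝ (fun pq : Vec n × Vec m => g pq.1 pq.2 k) (x, y)) c
      = ∑ k, z k * (fderiv ℝ (fun pq : Vec n × Vec m => g pq.1 pq.2 k) (x, y)) (c.1, 0)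
      + ∑ k, z k * (fderiv ℝ (fun pq : Vec n × Vec m => g pq.1 pq.2 k) (x, y)) (0, c.2) := by
    rw [← Finset.sum_add_distrib]
    refine Finset.sum_congr rfl fun k _ => ?_
    rw [hdec (fderiv ℝ (fun pq : Vec n × Vec m => g pq.1 pq.2 k) (x, y)), mul_add]
  have e1 : ∑ k, (v k - lam * z k) * (fderiv ℝ (fun pq : Vec n × Vec m => g pq.1 pq.2 k) (x, y)) c
      = ∑ k, v k * (fderiv ℝ (fun pq : Vec n × Vec m => g pq.1 pq.2 k) (x, y)) c
      - lam * ∑ k, z k * (fderiv ℝ (fun pq : Vec n × Vec m => g pq.1 pq.2 k) (x, y)) c := by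
    rw [Finset.mul_sum, ← Finset.sum_sub_distrib]
    refine Finset.sum_congr rfl fun k _ => by ring
  linear_combination hAc - e1 + lam * e2 + lam * h2c + lam * df
end

section
/- Let F and G be continuously differentiable and f and g be twice continuously differentiable. Suppose λ > 0 and (x,y,u,v,w) ∈ ℝⁿ×ℝᵐ×ℝᵖ×ℝ^q×ℝ^q satisfy the LLVF stationarity conditions with lower-level point equal to y: ∇F(x,y) + ∇G(x,y)ᵀu + ∇g(x,y)ᵀv + λ∇f(x,y) − λ(∇_x f(x,y) + ∇_x g(x,y)ᵀw, 0) = 0; ∇_y f(x,y) + ∇_y g(x,y)ᵀw = 0; u ≥ 0, G(x,y) ≤ 0, uᵀG(x,y) = 0; v ≥ 0, g(x,y) ≤ 0, vᵀg(x,y) = 0; w ≥ 0, g(x,y) ≤ 0, wᵀg(x,y) = 0. Suppose further that ∇_{(x,y)}(∇_yℓ)(x,y,w) = 0 and that there exists s ∈ ℝᵐ with ∇_y g(x,y)s − λg(x,y) ≥ 0 and wᵀ∇_y g(x,y)s = 0. Then, with t := λg(x,y) − ∇_y g(x,y)s, the tuple (x,y,w,s,u,v,t) satisfies the KKT-reformulation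 stationarity system for the same λ: ∇F(x,y) + ∇G(x,y)ᵀu + ∇g(x,y)ᵀ(v − λw) + [∇_{(x,y)}(∇_yℓ)(x,y,w)]ᵀs = 0; ∇_y f(x,y) + ∇_y g(x,y)ᵀw = 0; −λg(x,y) + ∇_y g(x,y)s + t = 0; u ≥ 0, G(x,y) ≤ 0, uᵀG(x,y) = 0; v ≥ 0, g(x,y) ≤ 0, vᵀg(x,y) = 0; t ≤ 0, w ≥ 0, tᵀw = 0. -/
/-!
At a point where `∇_{(x,y)}(∇_y ℓ)` vanishes the `s`-term of the KKT equation drops out. The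
lower-level stationarity `∇_y ℓ = 0` says that `∇f + ∑ wₖ ∇gₖ` only acts in the `x`-direction,
so the value-function correction `λ (∇ₓ f + ∑ wₖ ∇ₓ gₖ, 0)` of the LLVF condition equals
`λ (∇f + ∑ wₖ ∇gₖ)`, and the LLVF equation becomes the KKT equation with multiplier `v − λw`.
Complementarity of `t = λg − ∇_y g s` and `w` follows from `wᵀg = 0` and `wᵀ∇_y g s = 0`.
-/

open ContinuousLinearMap

section PartialDerivatives

variable {𝕜 : Type*} [NontriviallyNormedField 𝕜]
  {E F G : Type*} [NormedAddCommGroup E] [NormedSpace 𝕜 E] [NormedAddCommGroup F]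
  [NormedSpace 𝕜 F] [NormedAddCommGroup G] [NormedSpace 𝕜 G] {x : E} {y : F}

theorem fderiv_prod_eq_comp_fst_add_comp_snd {φ : E × F → G}
    (hφ : DifferentiableAt 𝕜 φ (x, y)) :
    fderiv 𝕜 φ (x, y) = (fderiv 𝕜 (fun x' => φ (x', y)) x).comp (fst 𝕜 E F)
      + (fderiv 𝕜 (fun y' => φ (x, y')) y).comp (snd 𝕜 E F) := by
  have hx : HasFDerivAt (fun x' => φ (x', y)) ((fderiv 𝕜 φ (x, y)).comp (inl 𝕜 E F)) x :=
    hφ.hasFDerivAt.comp x (hasFDerivAt_prodMk_left x y)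
  have hy : HasFDerivAt (fun y' => φ (x, y')) ((fderiv 𝕜 φ (x, y)).comp (inr 𝕜 E F)) y :=
    hφ.hasFDerivAt.comp y (hasFDerivAt_prodMk_right x y)
  rw [hx.fderiv, hy.fderiv]
  exact ContinuousLinearMap.ext fun z => (comp_inl_add_comp_inr _ z).symm

theorem fderiv_add_sum_smul_eq_comp_fst {ι : Type*} [Fintype ι] {φ₀ : E × F → G}
    {φ : ι → E × F → G} {c : ι → 𝕜} (h₀ : DifferentiableAt 𝕜 φ₀ (x, y))
    (h : ∀ k, DifferentiableAt 𝕜 (φ k) (x, y))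
    (hy : fderiv 𝕜 (fun y' => φ₀ (x, y')) y + ∑ k, c k • fderiv 𝕜 (fun y' => φ k (x, y')) y
      = 0) :
    fderiv 𝕜 φ₀ (x, y) + ∑ k, c k • fderiv 𝕜 (φ k) (x, y)
      = (fderiv 𝕜 (fun x' => φ₀ (x', y)) x
          + ∑ k, c k • fderiv 𝕜 (fun x' => φ k (x', y)) x).comp (fst 𝕜 E F) := by
  calc fderiv 𝕜 φ₀ (x, y) + ∑ k, c k • fderiv 𝕜 (φ k) (x, y)
      = (fderiv 𝕜 (fun x' => φ₀ (x', y)) x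
          + ∑ k, c k • fderiv 𝕜 (fun x' => φ k (x', y)) x).comp (fst 𝕜 E F)
        + (fderiv 𝕜 (fun y' => φ₀ (x, y')) y
          + ∑ k, c k • fderiv 𝕜 (fun y' => φ k (x, y')) y).comp (snd 𝕜 E F) := by
        simp only [fderiv_prod_eq_comp_fst_add_comp_snd h₀,
          fderiv_prod_eq_comp_fst_add_comp_snd (h _), add_comp, finsetSum_comp, smul_comp,
          smul_add, Finset.sum_add_distrib]
        abel
    _ = _ := by rw [hy, zero_comp, add_zero]

end PartialDerivatives

theorem stmt_14_general
    {n m p q : ℕ}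
    (F : Vec n → Vec m → ℝ) (G : Vec n → Vec m → Vec p)
    (f : Vec n → Vec m → ℝ) (g : Vec n → Vec m → Vec q)
    (hf : ContDiff ℝ 2 (fun pq : Vec n × Vec m => f pq.1 pq.2))
    (hg : ContDiff ℝ 2 (fun pq : Vec n × Vec m => g pq.1 pq.2))
    (lam : ℝ)
    (x : Vec n) (y : Vec m) (u : Vec p) (v w : Vec q)
    -- LLVF stationarity at (x, y) with lower-level point y and multiplier w
    (h1 : fderiv ℝ (fun pq : Vec n × Vec m => F pq.1 pq.2) (x, y)
        + ∑ j, u j • fderiv ℝ (fun pq : Vec n × Vec m => G pq.1 pq.2 j) (x, y)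
        + ∑ k, v k • fderiv ℝ (fun pq : Vec n × Vec m => g pq.1 pq.2 k) (x, y)
        + lam • fderiv ℝ (fun pq : Vec n × Vec m => f pq.1 pq.2) (x, y)
        - lam • ((fderiv ℝ (fun x' => f x' y) x
            + ∑ k, w k • fderiv ℝ (fun x' => g x' y k) x).comp
              (ContinuousLinearMap.fst ℝ (Vec n) (Vec m)))
        = 0)
    (h2 : fderiv ℝ (f x) y + ∑ k, w k • fderiv ℝ (fun y' => g x y' k) y = 0)
    (h3 : (∀ j, 0 ≤ u j) ∧ (∀ j, G x y j ≤ 0) ∧ ∑ j, u j * G x y j = 0)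
    (h4 : (∀ k, 0 ≤ v k) ∧ (∀ k, g x y k ≤ 0) ∧ ∑ k, v k * g x y k = 0)
    (h5 : (∀ k, 0 ≤ w k) ∧ (∀ k, g x y k ≤ 0) ∧ ∑ k, w k * g x y k = 0)
    -- ∇_{(x,y)}(∇_y ℓ)(x, y, w) = 0
    (h6 : ∀ i : Fin m,
      fderiv ℝ (fun pq : Vec n × Vec m => gradyL f g i (pq.1, pq.2, w)) (x, y) = 0)
    -- existence of s with ∇_y g(x,y)s − λg(x,y) ≥ 0 and wᵀ∇_y g(x,y)s = 0
    (s : Vec m)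
    (hs1 : ∀ k, 0 ≤ fderiv ℝ (fun y' => g x y' k) y s - lam * g x y k)
    (hs2 : ∑ k, w k * fderiv ℝ (fun y' => g x y' k) y s = 0) :
    -- the KKT-reformulation stationarity system for (x, y, w, s, u, v, t)
    ∃ t : Vec q, (∀ k, t k = lam * g x y k - fderiv ℝ (fun y' => g x y' k) y s) ∧
      (fderiv ℝ (fun pq : Vec n × Vec m => F pq.1 pq.2) (x, y)
        + ∑ j, u j • fderiv ℝ (fun pq : Vec n × Vec m => G pq.1 pq.2 j) (x, y)
        + ∑ k, (v k - lam * w k) •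
            fderiv ℝ (fun pq : Vec n × Vec m => g pq.1 pq.2 k) (x, y)
        + ∑ i, s i •
            fderiv ℝ (fun pq : Vec n × Vec m => gradyL f g i (pq.1, pq.2, w)) (x, y)
        = 0) ∧
      (fderiv ℝ (f x) y + ∑ k, w k • fderiv ℝ (fun y' => g x y' k) y = 0) ∧
      (∀ k, -lam * g x y k + fderiv ℝ (fun y' => g x y' k) y s + t k = 0) ∧
      ((∀ j, 0 ≤ u j) ∧ (∀ j, G x y j ≤ 0) ∧ ∑ j, u j * G x y j = 0) ∧
      ((∀ k, 0 ≤ v k) ∧ (∀ k, g x y k ≤ 0) ∧ ∑ k, v k * g x y k = 0) ∧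
      ((∀ k, t k ≤ 0) ∧ (∀ k, 0 ≤ w k) ∧ ∑ k, t k * w k = 0) := by
  have hdf : DifferentiableAt ℝ (fun pq : Vec n × Vec m => f pq.1 pq.2) (x, y) :=
    (hf.differentiable two_ne_zero).differentiableAt
  have hdg : ∀ k, DifferentiableAt ℝ (fun pq : Vec n × Vec m => g pq.1 pq.2 k) (x, y) :=
    differentiableAt_pi.mp (hg.differentiable two_ne_zero).differentiableAt
  have hLagrangian := fderiv_add_sum_smul_eq_comp_fst hdf hdg h2
  refine ⟨fun k => lam * g x y k - fderiv ℝ (fun y' => g x y' k) y s, fun k => rfl, ?_, h2,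
    fun k => by ring, h3, h4, fun k => by linarith [hs1 k], h5.1, ?_⟩
  · rw [← hLagrangian] at h1
    have hsplit : ∑ k, (v k - lam * w k) •
          fderiv ℝ (fun pq : Vec n × Vec m => g pq.1 pq.2 k) (x, y)
        = ∑ k, v k • fderiv ℝ (fun pq : Vec n × Vec m => g pq.1 pq.2 k) (x, y)
          - lam • ∑ k, w k • fderiv ℝ (fun pq : Vec n × Vec m => g pq.1 pq.2 k) (x, y) := by
      rw [Finset.smul_sum, ← Finset.sum_sub_distrib]
      exact Finset.sum_congr rfl fun k _ => by module
    simp only [h6, smul_zero, Finset.sum_const_zero, add_zero, hsplit]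
    linear_combination (norm := module) h1
  · calc ∑ k, (lam * g x y k - fderiv ℝ (fun y' => g x y' k) y s) * w k
        = lam * ∑ k, w k * g x y k - ∑ k, w k * fderiv ℝ (fun y' => g x y' k) y s := by
          rw [Finset.mul_sum, ← Finset.sum_sub_distrib]
          exact Finset.sum_congr rfl fun k _ => by ring
      _ = 0 := by rw [h5.2.2, hs2, mul_zero, sub_zero]

/-- An LLVF stationary point `(x,y)` with lower-level point `y` and
multiplier `w` such that `∇_{(x,y)}(∇_yℓ)(x,y,w) = 0` and `∃ s` with
`∇_y g(x,y)s − λg(x,y) ≥ 0` and `wᵀ∇_y g(x,y)s = 0` yields, with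
`t := λg(x,y) − ∇_y g(x,y)s`, a stationary point of the KKT reformulation for the
same `λ`. -/
theorem stmt_14
    {n m p q : ℕ} (hn : 0 < n) (hm : 0 < m) (hp : 0 < p) (hq : 0 < q)
    (F : Vec n → Vec m → ℝ) (G : Vec n → Vec m → Vec p)
    (f : Vec n → Vec m → ℝ) (g : Vec n → Vec m → Vec q)
    (hF : ContDiff ℝ 1 (fun pq : Vec n × Vec m => F pq.1 pq.2))
    (hG : ContDiff ℝ 1 (fun pq : Vec n × Vec m => G pq.1 pq.2))
    (hf : ContDiff ℝ 2 (fun pq : Vec n × Vec m => f pq.1 pq.2))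
    (hg : ContDiff ℝ 2 (fun pq : Vec n × Vec m => g pq.1 pq.2))
    (lam : ℝ) (hlam : 0 < lam)
    (x : Vec n) (y : Vec m) (u : Vec p) (v w : Vec q)
    -- LLVF stationarity at (x, y) with lower-level point y and multiplier w
    (h1 : fderiv ℝ (fun pq : Vec n × Vec m => F pq.1 pq.2) (x, y)
        + ∑ j, u j • fderiv ℝ (fun pq : Vec n × Vec m => G pq.1 pq.2 j) (x, y)
        + ∑ k, v k • fderiv ℝ (fun pq : Vec n × Vec m => g pq.1 pq.2 k) (x, y)
        + lam • fderiv ℝ (fun pq : Vec n × Vec m => f pq.1 pq.2) (x, y)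
        - lam • ((fderiv ℝ (fun x' => f x' y) x
            + ∑ k, w k • fderiv ℝ (fun x' => g x' y k) x).comp
              (ContinuousLinearMap.fst ℝ (Vec n) (Vec m)))
        = 0)
    (h2 : fderiv ℝ (f x) y + ∑ k, w k • fderiv ℝ (fun y' => g x y' k) y = 0)
    (h3 : (∀ j, 0 ≤ u j) ∧ (∀ j, G x y j ≤ 0) ∧ ∑ j, u j * G x y j = 0)
    (h4 : (∀ k, 0 ≤ v k) ∧ (∀ k, g x y k ≤ 0) ∧ ∑ k, v k * g x y k = 0)
    (h5 : (∀ k, 0 ≤ w k) ∧ (∀ k, g x y k ≤ 0) ∧ ∑ k, w k * g x y k = 0)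
    -- ∇_{(x,y)}(∇_y ℓ)(x, y, w) = 0
    (h6 : ∀ i : Fin m,
      fderiv ℝ (fun pq : Vec n × Vec m => gradyL f g i (pq.1, pq.2, w)) (x, y) = 0)
    -- existence of s with ∇_y g(x,y)s − λg(x,y) ≥ 0 and wᵀ∇_y g(x,y)s = 0
    (s : Vec m)
    (hs1 : ∀ k, 0 ≤ fderiv ℝ (fun y' => g x y' k) y s - lam * g x y k)
    (hs2 : ∑ k, w k * fderiv ℝ (fun y' => g x y' k) y s = 0) :
    -- the KKT-reformulation stationarity system for (x, y, w, s, u, v, t)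
    ∃ t : Vec q, (∀ k, t k = lam * g x y k - fderiv ℝ (fun y' => g x y' k) y s) ∧
      (fderiv ℝ (fun pq : Vec n × Vec m => F pq.1 pq.2) (x, y)
        + ∑ j, u j • fderiv ℝ (fun pq : Vec n × Vec m => G pq.1 pq.2 j) (x, y)
        + ∑ k, (v k - lam * w k) •
            fderiv ℝ (fun pq : Vec n × Vec m => g pq.1 pq.2 k) (x, y)
        + ∑ i, s i •
            fderiv ℝ (fun pq : Vec n × Vec m => gradyL f g i (pq.1, pq.2, w)) (x, y)
        = 0) ∧
      (fderiv ℝ (f x) y + ∑ k, w k • fderiv ℝ (fun y' => g x y' k) y = 0) ∧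
      (∀ k, -lam * g x y k + fderiv ℝ (fun y' => g x y' k) y s + t k = 0) ∧
      ((∀ j, 0 ≤ u j) ∧ (∀ j, G x y j ≤ 0) ∧ ∑ j, u j * G x y j = 0) ∧
      ((∀ k, 0 ≤ v k) ∧ (∀ k, g x y k ≤ 0) ∧ ∑ k, v k * g x y k = 0) ∧
      ((∀ k, t k ≤ 0) ∧ (∀ k, 0 ≤ w k) ∧ ∑ k, t k * w k = 0) :=
  stmt_14_general F G f g hf hg lam x y u v w h1 h2 h3 h4 h5 h6 s hs1 hs2
end

section
/- Let f and g be continuously differentiable and let (x̄,ȳ) satisfy g(x̄,ȳ) ≤ 0 and f(x̄,ȳ) ≤ f(x̄,y) for all y with g(x̄,y) ≤ 0 (i.e., ȳ ∈ S(x̄)). Set I² := {i : g_i(x̄,ȳ) = 0}, and let v₀ ≥ 0 and v_i ≥ 0 for i ∈ I² satisfy v₀ + Σ_{i∈I²} v_i = 1 and v₀∇_y f(x̄,ȳ) + Σ_{i∈I²} v_i∇_y g_i(x̄,ȳ) = 0. Then there is no d = (d¹,d²) ∈ ℝⁿ×ℝᵐ such that ∇g_j(x̄,ȳ)ᵀd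 < 0 for every j ∈ I² and v₀∇_y f(x̄,ȳ)ᵀd² − Σ_{i∈I²} v_i∇_x g_i(x̄,ȳ)ᵀd¹ < 0. In particular, the extended Mangasarian–Fromowitz constraint qualification for the GSIP form of (LLVFR) fails at every feasible point of (LLVFR). -/
theorem DifferentiableAt.fderiv_partial_add_fderiv_partial {𝕜 E F G : Type*}
    [NontriviallyNormedField 𝕜] [NormedAddCommGroup E] [NormedSpace 𝕜 E]
    [NormedAddCommGroup F] [NormedSpace 𝕜 F] [NormedAddCommGroup G] [NormedSpace 𝕜 G]
    {h : E × F → G} {p : E × F} (hh : DifferentiableAt 𝕜 h p) (d : E × F) :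
    fderiv 𝕜 (fun x => h (x, p.2)) p.1 d.1 + fderiv 𝕜 (fun y => h (p.1, y)) p.2 d.2
      = fderiv 𝕜 h p d := by
  have hx : HasFDerivAt (fun x => h (x, p.2)) (fderiv 𝕜 h p ∘L .inl 𝕜 E F) p.1 :=
    hh.hasFDerivAt.comp p.1 (hasFDerivAt_prodMk_left p.1 p.2)
  have hy : HasFDerivAt (fun y => h (p.1, y)) (fderiv 𝕜 h p ∘L .inr 𝕜 E F) p.2 :=
    hh.hasFDerivAt.comp p.2 (hasFDerivAt_prodMk_right p.1 p.2)
  rw [hx.fderiv, hy.fderiv]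
  exact (fderiv 𝕜 h p).comp_inl_add_comp_inr d

theorem sum_mul_nonpos_of_supported_on_zeros {ι : Type*} [Fintype ι] {c v a : ι → ℝ}
    (hv : ∀ i, c i = 0 → 0 ≤ v i) (hsupp : ∀ i, c i ≠ 0 → v i = 0)
    (ha : ∀ i, c i = 0 → a i ≤ 0) :
    ∑ i, v i * a i ≤ 0 := by
  refine Finset.sum_nonpos fun i _ => ?_
  by_cases hi : c i = 0
  · exact mul_nonpos_of_nonneg_of_nonpos (hv i hi) (ha i hi)
  · simp [hsupp i hi]

theorem stmt_15_general
    {n m q : ℕ}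
    (f : Vec n → Vec m → ℝ) (g : Vec n → Vec m → Vec q)
    (hg : ContDiff ℝ 1 (fun pq : Vec n × Vec m => g pq.1 pq.2))
    (xb : Vec n) (yb : Vec m)
    -- Fritz-John multipliers supported on the active index set I²
    (v0 : ℝ) (v : Vec q)
    (hv : ∀ i, g xb yb i = 0 → 0 ≤ v i)
    (hvsupp : ∀ i, g xb yb i ≠ 0 → v i = 0)
    (heq : v0 • fderiv ℝ (f xb) yb
      + ∑ i, v i • fderiv ℝ (fun y => g xb y i) yb = 0) :
    ¬ ∃ d : Vec n × Vec m,
      (∀ j, g xb yb j = 0 →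
        fderiv ℝ (fun pq : Vec n × Vec m => g pq.1 pq.2 j) (xb, yb) d < 0) ∧
      v0 * fderiv ℝ (f xb) yb d.2
        - ∑ i, v i * fderiv ℝ (fun x => g x yb i) xb d.1 < 0 := by
  rintro ⟨d, hactive, hlt⟩
  have hgi (i : Fin q) :
      DifferentiableAt ℝ (fun pq : Vec n × Vec m => g pq.1 pq.2 i) (xb, yb) :=
    ((contDiff_pi.mp hg i).differentiable one_ne_zero).differentiableAt
  have hstat : v0 * fderiv ℝ (f xb) yb d.2
      = -∑ i, v i * fderiv ℝ (fun y => g xb y i) yb d.2 := by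
    have := congrArg (fun L : Vec m →L[ℝ] ℝ => L d.2) heq
    simp only [add_apply, sum_apply, smul_apply, smul_eq_mul, zero_apply] at this
    linarith
  have hrewrite : v0 * fderiv ℝ (f xb) yb d.2
      - ∑ i, v i * fderiv ℝ (fun x => g x yb i) xb d.1
      = -∑ i, v i * fderiv ℝ (fun pq : Vec n × Vec m => g pq.1 pq.2 i) (xb, yb) d := by
    simp only [hstat, ← (hgi _).fderiv_partial_add_fderiv_partial d, mul_add,
      Finset.sum_add_distrib]
    ring
  have hcombo : ∑ i, v i * fderiv ℝ (fun pq : Vec n × Vec m => g pq.1 pq.2 i) (xb, yb) d ≤ 0 :=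
    sum_mul_nonpos_of_supported_on_zeros hv hvsupp fun j hj => (hactive j hj).le
  linarith

/-- The extended Mangasarian–Fromowitz constraint qualification for
the GSIP form of (LLVFR) fails: given `ȳ ∈ S(x̄)` and Fritz-John multipliers
`(v₀, v)` of the lower-level problem (supported on the active set `I²`), there is no
direction `d = (d¹,d²)` with `∇g_j(x̄,ȳ)ᵀd < 0` for all `j ∈ I²` and
`v₀∇_y f(x̄,ȳ)ᵀd² − Σ_{i∈I²} v_i ∇_x g_i(x̄,ȳ)ᵀd¹ < 0`. -/
theorem stmt_15
    {n m q : ℕ} (hn : 0 < n) (hm : 0 < m) (hq : 0 < q)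
    (f : Vec n → Vec m → ℝ) (g : Vec n → Vec m → Vec q)
    (hf : ContDiff ℝ 1 (fun pq : Vec n × Vec m => f pq.1 pq.2))
    (hg : ContDiff ℝ 1 (fun pq : Vec n × Vec m => g pq.1 pq.2))
    (xb : Vec n) (yb : Vec m)
    -- ȳ ∈ S(x̄)
    (hfeas : ∀ i, g xb yb i ≤ 0)
    (hmin : ∀ y, (∀ i, g xb y i ≤ 0) → f xb yb ≤ f xb y)
    -- Fritz-John multipliers supported on the active index set I²
    (v0 : ℝ) (v : Vec q)
    (hv0 : 0 ≤ v0)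
    (hv : ∀ i, g xb yb i = 0 → 0 ≤ v i)
    (hvsupp : ∀ i, g xb yb i ≠ 0 → v i = 0)
    (hsum : v0 + ∑ i, v i = 1)
    (heq : v0 • fderiv ℝ (f xb) yb
      + ∑ i, v i • fderiv ℝ (fun y => g xb y i) yb = 0) :
    ¬ ∃ d : Vec n × Vec m,
      (∀ j, g xb yb j = 0 →
        fderiv ℝ (fun pq : Vec n × Vec m => g pq.1 pq.2 j) (xb, yb) d < 0) ∧
      v0 * fderiv ℝ (f xb) yb d.2
        - ∑ i, v i * fderiv ℝ (fun x => g x yb i) xb d.1 < 0 :=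
  stmt_15_general f g hg xb yb v0 v hv hvsupp heq
end
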